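/- arXiv:2001.00196 — 6 statements merged into one kernel-verified Lean document; each statement's English description precedes it below -/
import Mathlib

section
/- Let X be a separable Banach space, (Ω, F, P) a probability space with filtration (F_n : 0 ≤ n ≤ N), and (f_n : 0 ≤ n ≤ N) an X-valued martingale with respect to this filtration. Then for every ε > 0 there exists a filtration (G_n : 0 ≤ n ≤ N) such that each G_n is countably generated by a countable partition into atoms, G_n ⊆ F_n, and ‖f_n − E(f_N | G_n)‖ < ε for all 0 ≤ n ≤ N (the norm being the essential supremum of the X-norm). -/
/-!
Quantize each `f n` through a measurable map `u : X → ℕ` with `‖x - d (u x)‖ < ε / 4`, where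
`d` is a dense sequence, and let `𝒢 n = σ(u ∘ f 0, …, u ∘ f n)`. Countably-valued generators make
`𝒢 n` atomic, and `𝒢 n ≤ ℱ n` by adaptedness. Since `g = d ∘ u ∘ f n` is `𝒢 n`-measurable and
uniformly `ε / 4`-close to `f n`, the martingale property and the `L^∞`-contractivity of
conditional expectation give `‖f n - E[f N | 𝒢 n]‖ ≤ ‖f n - g‖ + ‖E[f n - g | 𝒢 n]‖ ≤ ε / 2`.
-/

open MeasureTheory

theorem exists_measurable_index_dist_lt (X : Type*) [PseudoMetricSpace X]
    [TopologicalSpace.SeparableSpace X] [Nonempty X] [MeasurableSpace X] [OpensMeasurableSpace X]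
    {δ : ℝ} (hδ : 0 < δ) :
    ∃ (d : ℕ → X) (u : X → ℕ), Measurable u ∧ ∀ x, dist x (d (u x)) < δ := by
  have hex (x : X) : ∃ j, dist x (TopologicalSpace.denseSeq X j) < δ :=
    Metric.mem_closure_range_iff.1 (TopologicalSpace.denseRange_denseSeq X x) δ hδ
  refine ⟨_, fun x => Nat.find (hex x), measurable_find hex fun j => ?_,
    fun x => Nat.find_spec (hex x)⟩
  exact measurableSet_lt (measurable_id.dist measurable_const) measurable_const

section PrefixSigma

variable {Ω β : Type*} [MeasurableSpace β] (k : ℕ → Ω → β)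

def pathPrefix (n : ℕ) (ω : Ω) : Fin (n + 1) → β := fun i => k i ω

/-- `σ(k 0, …, k n)`, as a pullback along the joint map so that its atoms are its fibres. -/
abbrev prefixSigma (n : ℕ) : MeasurableSpace Ω :=
  MeasurableSpace.comap (pathPrefix k n) MeasurableSpace.pi

variable {k}

theorem prefixSigma_le_iff {m : MeasurableSpace Ω} {n : ℕ} :
    prefixSigma k n ≤ m ↔ ∀ i ≤ n, Measurable[m] (k i) := by
  rw [prefixSigma, ← measurable_iff_comap_le, measurable_pi_iff]
  exact ⟨fun h i hi => h ⟨i, Nat.lt_succ_of_le hi⟩, fun h i => h i (Nat.le_of_lt_succ i.isLt)⟩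

theorem measurable_prefixSigma {i n : ℕ} (hi : i ≤ n) : Measurable[prefixSigma k n] (k i) :=
  prefixSigma_le_iff.1 le_rfl i hi

theorem prefixSigma_le_succ (n : ℕ) : prefixSigma k n ≤ prefixSigma k (n + 1) :=
  prefixSigma_le_iff.2 fun _ hi => measurable_prefixSigma (hi.trans n.le_succ)

end PrefixSigma

theorem MeasurableSpace.comap_eq_generateFrom_fibers {Ω ι : Type*} [Countable ι]
    [MeasurableSpace ι] [MeasurableSingletonClass ι] (q : Ω → ι) :
    MeasurableSpace.comap q ‹_› = MeasurableSpace.generateFrom (Set.range fun i => q ⁻¹' {i}) := by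
  refine le_antisymm ?_ (MeasurableSpace.generateFrom_le ?_)
  · rintro _ ⟨s, -, rfl⟩
    rw [← Set.biUnion_of_singleton s, Set.preimage_iUnion₂]
    exact MeasurableSet.biUnion s.to_countable fun i _ =>
      MeasurableSpace.measurableSet_generateFrom ⟨i, rfl⟩
  · rintro _ ⟨i, rfl⟩
    exact ⟨{i}, measurableSet_singleton i, rfl⟩

theorem MeasureTheory.Martingale.ae_norm_sub_condExp_le {Ω E : Type*} {m : MeasurableSpace Ω}
    {μ : Measure Ω} [IsFiniteMeasure μ] [NormedAddCommGroup E] [NormedSpace ℝ E] [CompleteSpace E]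
    {ℱ : Filtration ℕ m} {f : ℕ → Ω → E} (hf : Martingale f ℱ μ) {i j : ℕ} (hij : i ≤ j)
    {𝒢 : MeasurableSpace Ω} (h𝒢 : 𝒢 ≤ ℱ i) {g : Ω → E} (hg : StronglyMeasurable[𝒢] g)
    {δ : ℝ} (hfg : ∀ ω, ‖f i ω - g ω‖ ≤ δ) :
    ∀ᵐ ω ∂μ, ‖f i ω - μ[f j|𝒢] ω‖ ≤ 2 * δ := by
  have h𝒢m : 𝒢 ≤ m := h𝒢.trans (ℱ.le i)
  have hfg_int : Integrable (f i - g) μ :=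
    .of_bound ((hf.stronglyAdapted i).mono (ℱ.le i) |>.sub (hg.mono h𝒢m)).aestronglyMeasurable
      δ (ae_of_all _ hfg)
  have hg_int : Integrable g μ := by simpa using (hf.integrable i).sub hfg_int
  have tower : μ[f j|𝒢] =ᵐ[μ] μ[f i|𝒢] :=
    (condExp_condExp_of_le h𝒢 (ℱ.le i)).symm.trans (condExp_congr_ae (hf.condExp_ae_eq hij))
  have hsub : μ[f i - g|𝒢] =ᵐ[μ] μ[f i|𝒢] - g := by
    simpa only [condExp_of_stronglyMeasurable h𝒢m hg hg_int] using
      condExp_sub (m := 𝒢) (hf.integrable i) hg_int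
  have hbdd : ∀ᵐ ω ∂μ, ‖μ[f i - g|𝒢] ω‖ ≤ δ :=
    ae_bdd_norm_condExp_of_ae_bdd_norm (ae_of_all μ hfg)
  filter_upwards [tower, hsub, hbdd] with ω htower hsub hbdd
  calc ‖f i ω - μ[f j|𝒢] ω‖ = ‖(f i ω - g ω) - μ[f i - g|𝒢] ω‖ := by
        rw [htower, hsub, Pi.sub_apply, sub_sub_sub_cancel_right]
    _ ≤ ‖f i ω - g ω‖ + ‖μ[f i - g|𝒢] ω‖ := norm_sub_le _ _
    _ ≤ 2 * δ := by linarith [hfg ω]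

/-- Approximation of a Banach-valued martingale by a martingale with respect to an
atomic filtration: Proposition 1 (one-parameter approximation). -/
theorem martingale_atomic_approximation
    {Ω : Type*} {m : MeasurableSpace Ω} {μ : Measure Ω} [IsProbabilityMeasure μ]
    {X : Type*} [NormedAddCommGroup X] [NormedSpace ℝ X] [CompleteSpace X]
    [TopologicalSpace.SeparableSpace X]
    (N : ℕ) (ℱ : MeasureTheory.Filtration ℕ m)
    (f : ℕ → Ω → X) (hf : Martingale f ℱ μ)
    (ε : ℝ) (hε : 0 < ε) :
    ∃ 𝒢 : ℕ → MeasurableSpace Ω,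
      -- `𝒢` is a filtration
      (∀ n, 𝒢 n ≤ 𝒢 (n + 1)) ∧
      -- each `𝒢 n` is atomic: generated by a countable measurable partition into atoms
      (∀ n, ∃ (ι : Type) (_ : Countable ι) (p : ι → Set Ω),
        Pairwise (Function.onFun Disjoint p) ∧ (⋃ k, p k) = Set.univ ∧
        𝒢 n = MeasurableSpace.generateFrom (Set.range p)) ∧
      -- `𝒢 n` is a sub-σ-field of `ℱ n`
      (∀ n, 𝒢 n ≤ ℱ n) ∧
      -- the approximation property, in essential supremum norm
      (∀ n ≤ N, eLpNorm (fun ω => f n ω - (μ[f N | 𝒢 n]) ω) ⊤ μ < ENNReal.ofReal ε) := by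
  borelize X
  obtain ⟨d, u, hu, hdu⟩ := exists_measurable_index_dist_lt X (by positivity : 0 < ε / 4)
  set k : ℕ → Ω → ℕ := fun n => u ∘ f n
  have h𝒢ℱ (n : ℕ) : prefixSigma k n ≤ ℱ n :=
    prefixSigma_le_iff.2 fun i hi =>
      (hu.comp (hf.stronglyAdapted i).measurable).mono (ℱ.mono hi) le_rfl
  refine ⟨prefixSigma k, prefixSigma_le_succ, fun n => ?_, h𝒢ℱ, fun n hn => ?_⟩
  · refine ⟨_, inferInstance, fun v => pathPrefix k n ⁻¹' {v}, pairwise_disjoint_fiber _, ?_,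
      MeasurableSpace.comap_eq_generateFrom_fibers _⟩
    rw [← Set.preimage_iUnion, Set.iUnion_of_singleton, Set.preimage_univ]
  have hbound := hf.ae_norm_sub_condExp_le hn (h𝒢ℱ n) (g := d ∘ k n)
    (measurable_from_nat.comp (measurable_prefixSigma le_rfl)).stronglyMeasurable
    fun ω => (dist_eq_norm (f n ω) _).symm.trans_le (hdu (f n ω)).le
  calc eLpNorm (fun ω => f n ω - (μ[f N | prefixSigma k n]) ω) ⊤ μ
      ≤ ENNReal.ofReal (2 * (ε / 4)) := by
        rw [eLpNorm_exponent_top]; exact eLpNormEssSup_le_of_ae_bound hbound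
    _ < ENNReal.ofReal ε := by rw [ENNReal.ofReal_lt_ofReal_iff hε]; linarith
end

section
/- Let (Ω, F, P) be a discrete probability space with filtration (F_n : 0 ≤ n ≤ N), each F_n atomic with atoms of positive probability and F_0 = {∅, Ω}. Define π on the product space ⨂_{n=1}^{N} ⨂_{A ∈ at(F_{n−1})} (A, F_n ∩ A, P_A) by π(φ_1, …, φ_N) = φ_N(φ_{N−1}(⋯φ_1(Ω)⋯)), where each φ_n maps atoms of F_{n−1} to atoms of F_n contained in them, coordinate A distributed as P_A. Then for every atom A_N of F_N with ancestor chain A_0 = Ω ⊇ A_1 ⊇ ⋯ ⊇ A_N (A_n ∈ at(F_n)), the measure of π⁻¹(A_N) equals P(A_0) · ∏_{n=1}^{N} P(A_n)/P(A_{n−1}) = P(A_N). Consequently π is measure-preserving and π⁻¹(U) is measurable with respect to the canonical filtration at level n for every U ∈ F_n. -/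
/-!
The index `iter φ n` of the atom reached after `n` evaluations depends only on the
coordinates of `φ` at levels `< n`, so under the product measure it is independent of every finite
cylinder over levels `≥ n`. Hence its law obeys the Chapman–Kolmogorov recursion
`μ {iter (n+1) = j} = ∑ i, μ {iter n = i} * ν n i {j}`, which for `ν n i = P_{a n i}` is the law of
total probability; by induction `μ {iter n = j} = P (a n j)`. The product formula telescopes to
the same value, and summing over the atoms inside `U ∈ F N` gives measure preservation.
-/

open MeasureTheory Set Function
open scoped ENNReal

section Partition

variable {Ω κ : Type*} {a : κ → Set Ω} {U : Set Ω}

lemma subset_or_disjoint_of_measurableSet_generateFrom (hdisj : Pairwise (Disjoint on a))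
    (hU : MeasurableSet[MeasurableSpace.generateFrom (range a)] U) (j : κ) :
    a j ⊆ U ∨ Disjoint (a j) U := by
  induction hU with
  | basic t ht =>
    obtain ⟨i, rfl⟩ := ht
    rcases eq_or_ne j i with rfl | hji
    exacts [.inl subset_rfl, .inr (hdisj hji)]
  | empty => exact .inr (disjoint_empty _)
  | compl t _ ih =>
    exact ih.symm.imp subset_compl_iff_disjoint_right.mpr disjoint_compl_right_iff_subset.mpr
  | iUnion f _ ih =>
    by_cases h : ∃ k, a j ⊆ f k
    · obtain ⟨k, hk⟩ := h
      exact .inl (hk.trans (subset_iUnion f k))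
    · exact .inr (disjoint_iUnion_right.2 fun k => (ih k).resolve_left fun hk => h ⟨k, hk⟩)

lemma biUnion_subset_eq_of_measurableSet_generateFrom (hdisj : Pairwise (Disjoint on a))
    (hcover : ⋃ i, a i = univ) (hU : MeasurableSet[MeasurableSpace.generateFrom (range a)] U) :
    ⋃ j ∈ {j | a j ⊆ U}, a j = U := by
  refine Subset.antisymm (iUnion₂_subset fun j hj => hj) fun x hx => ?_
  obtain ⟨j, hj⟩ := mem_iUnion.1 (hcover ▸ mem_univ x)
  exact mem_biUnion ((subset_or_disjoint_of_measurableSet_generateFrom hdisj hU j).resolve_right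
    (not_disjoint_iff.2 ⟨x, hj, hx⟩)) hj

variable [MeasurableSpace Ω] [Countable κ] (μ : Measure Ω)

lemma measure_eq_tsum_of_measurableSet_generateFrom (hdisj : Pairwise (Disjoint on a))
    (hcover : ⋃ i, a i = univ) (hmeas : ∀ i, MeasurableSet (a i))
    (hU : MeasurableSet[MeasurableSpace.generateFrom (range a)] U) :
    μ U = ∑' j : {j | a j ⊆ U}, μ (a j) := by
  conv_lhs => rw [← biUnion_subset_eq_of_measurableSet_generateFrom hdisj hcover hU]
  exact measure_biUnion (to_countable _) (hdisj.set_pairwise _) fun j _ => hmeas j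

lemma tsum_measure_inter_eq (hdisj : Pairwise (Disjoint on a)) (hcover : ⋃ i, a i = univ)
    (hmeas : ∀ i, MeasurableSet (a i)) {B : Set Ω} (hB : MeasurableSet B) :
    ∑' i, μ (a i ∩ B) = μ B := by
  rw [← measure_iUnion (fun i i' h => (hdisj h).mono inter_subset_left inter_subset_left)
    fun i => (hmeas i).inter hB, ← iUnion_inter, hcover, univ_inter]

end Partition

lemma ENNReal.mul_prod_range_div (f : ℕ → ℝ≥0∞) (h0 : ∀ n, f n ≠ 0) (htop : ∀ n, f n ≠ ⊤)
    (N : ℕ) : f 0 * ∏ n ∈ Finset.range N, f (n + 1) / f n = f N := by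
  induction N with
  | zero => simp
  | succ N ih =>
    rw [Finset.prod_range_succ, ← mul_assoc, ih, ENNReal.mul_div_cancel (h0 N) (htop N)]

namespace IteratedEvaluation

variable {ι : ℕ → Type*}

def iterEval (i0 : ι 0) (φ : (n : ℕ) → ι n → ι (n + 1)) (n : ℕ) : ι n :=
  Nat.rec (motive := fun k => ι k) i0 (fun k j => φ k j) n

@[simp]
lemma iterEval_zero (i0 : ι 0) (φ : (n : ℕ) → ι n → ι (n + 1)) : iterEval i0 φ 0 = i0 := rfl

@[simp]
lemma iterEval_succ (i0 : ι 0) (φ : (n : ℕ) → ι n → ι (n + 1)) (n : ℕ) :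
    iterEval i0 φ (n + 1) = φ n (iterEval i0 φ n) := rfl

lemma setOf_iterEval_succ_eq (i0 : ι 0) (n : ℕ) (j : ι (n + 1)) :
    {φ | iterEval i0 φ (n + 1) = j} = ⋃ i, {φ | iterEval i0 φ n = i} ∩ {φ | φ n i = j} := by
  ext φ
  simp

def finCylinder (s : Finset ((n : ℕ) × ι n)) (t : (p : (n : ℕ) × ι n) → Set (ι (p.1 + 1))) :
    Set ((n : ℕ) → ι n → ι (n + 1)) :=
  {φ | ∀ p ∈ s, φ p.1 p.2 ∈ t p}

@[simp]
lemma finCylinder_empty (t : (p : (n : ℕ) × ι n) → Set (ι (p.1 + 1))) :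
    finCylinder ∅ t = univ := by
  simp [finCylinder]

lemma finCylinder_insert_update [DecidableEq ((n : ℕ) × ι n)] {s : Finset ((n : ℕ) × ι n)}
    {p : (n : ℕ) × ι n} (hp : p ∉ s)
    (t : (p : (n : ℕ) × ι n) → Set (ι (p.1 + 1))) (u : Set (ι (p.1 + 1))) :
    finCylinder (insert p s) (update t p u) = {φ | φ p.1 p.2 ∈ u} ∩ finCylinder s t := by
  ext φ
  simp only [finCylinder, Finset.forall_mem_insert, update_self, mem_ofPred_eq, mem_inter_iff]
  refine and_congr_right fun _ => forall₂_congr fun q hq => ?_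
  rw [update_of_ne (ne_of_mem_of_not_mem hq hp)]

variable [∀ n, MeasurableSpace (ι n)]

def truncate (n : ℕ) (φ : (n : ℕ) → ι n → ι (n + 1)) :
    (p : {p : (k : ℕ) × ι k // p.1 < n}) → ι (p.1.1 + 1) :=
  fun p => φ p.1.1 p.1.2

lemma measurable_truncate (n : ℕ) : Measurable (truncate (ι := ι) n) :=
  measurable_pi_lambda _ fun p => (measurable_pi_apply p.1.2).comp (measurable_pi_apply p.1.1)

def canonicalFiltration :
    Filtration ℕ (inferInstance : MeasurableSpace ((n : ℕ) → ι n → ι (n + 1))) where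
  seq n := MeasurableSpace.comap (truncate n) inferInstance
  mono' k n hkn := by
    have hres : Measurable fun (ψ : (p : {p : (l : ℕ) × ι l // p.1 < n}) → ι (p.1.1 + 1))
        (q : {p : (l : ℕ) × ι l // p.1 < k}) => ψ ⟨q.1, q.2.trans_le hkn⟩ :=
      measurable_pi_lambda _ fun q => measurable_pi_apply _
    exact (hres.comp (comap_measurable (truncate n))).comap_le
  le' n := (measurable_truncate n).comap_le

lemma measurable_apply_canonicalFiltration {k n : ℕ} (hkn : k < n) (i : ι k) :
    Measurable[canonicalFiltration n] fun φ : (n : ℕ) → ι n → ι (n + 1) => φ k i :=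
  (measurable_pi_apply (⟨⟨k, i⟩, hkn⟩ : {p : (l : ℕ) × ι l // p.1 < n})).comp
    (comap_measurable (truncate n))

variable [∀ n, Countable (ι n)] [∀ n, MeasurableSingletonClass (ι n)]

lemma measurable_iterEval (i0 : ι 0) (n : ℕ) :
    Measurable[canonicalFiltration n] fun φ => iterEval i0 φ n := by
  induction n with
  | zero => exact measurable_const
  | succ n ih =>
    refine @measurable_to_countable' _ _ _ _ (canonicalFiltration (n + 1)) _ fun j => ?_
    change MeasurableSet[canonicalFiltration (n + 1)] {φ | iterEval i0 φ (n + 1) = j}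
    rw [setOf_iterEval_succ_eq]
    exact .iUnion fun i =>
      (canonicalFiltration.mono n.le_succ _ (ih (measurableSet_singleton i))).inter
        (measurable_apply_canonicalFiltration n.lt_succ_self i (measurableSet_singleton j))

lemma measurableSet_setOf_iterEval_eq (i0 : ι 0) (n : ℕ) (i : ι n) :
    MeasurableSet {φ | iterEval i0 φ n = i} :=
  canonicalFiltration.le n _ (measurable_iterEval i0 n (measurableSet_singleton i))

lemma measurableSet_finCylinder (s : Finset ((n : ℕ) × ι n))
    (t : (p : (n : ℕ) × ι n) → Set (ι (p.1 + 1))) : MeasurableSet (finCylinder s t) := by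
  simp only [finCylinder, ofPred_forall]
  exact Finset.measurableSet_biInter s fun p _ =>
    measurable_pi_apply p.2 |>.comp (measurable_pi_apply p.1) (t p).to_countable.measurableSet

variable {ν : (n : ℕ) → ι n → Measure (ι (n + 1))} {μ : Measure ((n : ℕ) → ι n → ι (n + 1))}

/-- The inductive step of `measure_iterEval_inter_finCylinder`, taking the statement at level `n`
as hypothesis; with `s = ∅` it also yields the recursion `measure_iterEval_succ`. -/
lemma measure_iterEval_succ_inter_finCylinder (i0 : ι 0) {n : ℕ}
    (hn : ∀ (s : Finset ((k : ℕ) × ι k)) (t : (p : (k : ℕ) × ι k) → Set (ι (p.1 + 1))),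
      (∀ p ∈ s, n ≤ p.1) → ∀ i, μ ({φ | iterEval i0 φ n = i} ∩ finCylinder s t) =
        μ {φ | iterEval i0 φ n = i} * ∏ p ∈ s, ν p.1 p.2 (t p))
    {s : Finset ((k : ℕ) × ι k)} (hs : ∀ p ∈ s, n < p.1)
    (t : (p : (k : ℕ) × ι k) → Set (ι (p.1 + 1))) (j : ι (n + 1)) :
    μ ({φ | iterEval i0 φ (n + 1) = j} ∩ finCylinder s t) =
      (∑' i, μ {φ | iterEval i0 φ n = i} * ν n i {j}) * ∏ p ∈ s, ν p.1 p.2 (t p) := by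
  classical
  have hns : ∀ i : ι n, (⟨n, i⟩ : (k : ℕ) × ι k) ∉ s := fun i hi => (hs _ hi).false
  have hdecomp : {φ | iterEval i0 φ (n + 1) = j} ∩ finCylinder s t =
      ⋃ i, {φ | iterEval i0 φ n = i} ∩ finCylinder (insert ⟨n, i⟩ s) (update t ⟨n, i⟩ {j}) := by
    simp_rw [finCylinder_insert_update (hns _), setOf_iterEval_succ_eq, iUnion_inter, inter_assoc,
      mem_singleton_iff]
  have hfactor : ∀ i, μ ({φ | iterEval i0 φ n = i} ∩
      finCylinder (insert ⟨n, i⟩ s) (update t ⟨n, i⟩ {j})) =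
        μ {φ | iterEval i0 φ n = i} * ν n i {j} * ∏ p ∈ s, ν p.1 p.2 (t p) := by
    intro i
    rw [hn _ _ ((Finset.forall_mem_insert _ _ _).2 ⟨le_rfl, fun p hp => (hs p hp).le⟩),
      Finset.prod_insert (hns i), update_self, mul_assoc]
    congr 2
    refine Finset.prod_congr rfl fun p hp => ?_
    rw [update_of_ne (ne_of_mem_of_not_mem hp (hns i))]
  rw [hdecomp, measure_iUnion, tsum_congr hfactor, ENNReal.tsum_mul_right]
  · exact fun i i' hii' => Disjoint.mono inter_subset_left inter_subset_left
      (disjoint_left.2 fun φ hi hi' => hii' (hi.symm.trans hi'))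
  · exact fun i => (measurableSet_setOf_iterEval_eq i0 n i).inter (measurableSet_finCylinder _ _)

lemma measure_iterEval_inter_finCylinder (i0 : ι 0)
    (hμ : ∀ s t, μ (finCylinder s t) = ∏ p ∈ s, ν p.1 p.2 (t p)) (n : ℕ)
    (s : Finset ((k : ℕ) × ι k)) (t : (p : (k : ℕ) × ι k) → Set (ι (p.1 + 1)))
    (hs : ∀ p ∈ s, n ≤ p.1) (i : ι n) :
    μ ({φ | iterEval i0 φ n = i} ∩ finCylinder s t) =
      μ {φ | iterEval i0 φ n = i} * ∏ p ∈ s, ν p.1 p.2 (t p) := by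
  induction n generalizing s t with
  | zero =>
    by_cases hi : i0 = i
    · have huniv : {φ | iterEval i0 φ 0 = i} = univ := eq_univ_of_forall fun _ => hi
      rw [huniv, univ_inter, hμ, ← finCylinder_empty t, hμ, Finset.prod_empty, one_mul]
    · have hempty : {φ | iterEval i0 φ 0 = i} = ∅ := eq_empty_of_forall_notMem fun _ => hi
      rw [hempty]
      simp
  | succ n ih =>
    rw [measure_iterEval_succ_inter_finCylinder i0 ih hs]
    congr 1
    simpa using (measure_iterEval_succ_inter_finCylinder i0 ih (s := ∅) (by simp) t i).symm

lemma measure_iterEval_succ (i0 : ι 0)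
    (hμ : ∀ s t, μ (finCylinder s t) = ∏ p ∈ s, ν p.1 p.2 (t p)) (n : ℕ) (j : ι (n + 1)) :
    μ {φ | iterEval i0 φ (n + 1) = j} = ∑' i, μ {φ | iterEval i0 φ n = i} * ν n i {j} := by
  simpa using measure_iterEval_succ_inter_finCylinder i0
    (measure_iterEval_inter_finCylinder i0 hμ n) (s := ∅) (by simp) (fun _ => ∅) j

end IteratedEvaluation

open IteratedEvaluation

theorem iterated_evaluation_measure_preserving_general
    {Ω : Type*} {m : MeasurableSpace Ω} (P : Measure Ω) [IsProbabilityMeasure P]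
    (N : ℕ)
    (ι : ℕ → Type) [∀ n, Countable (ι n)]
    [∀ n, MeasurableSpace (ι n)] [∀ n, MeasurableSingletonClass (ι n)]
    (a : (n : ℕ) → ι n → Set Ω)
    -- each level is a countable partition into atoms of positive measure
    (ha_disj : ∀ n, Pairwise (Function.onFun Disjoint (a n)))
    (ha_cover : ∀ n, (⋃ i, a n i) = Set.univ)
    (ha_pos : ∀ n i, 0 < P (a n i))
    -- the filtration generated by the atoms
    (F : ℕ → MeasurableSpace Ω)
    (hF : ∀ n, F n = MeasurableSpace.generateFrom (Set.range (a n)))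
    (hF_le : ∀ n, F n ≤ m)
    -- `F 0` is trivial: its unique atom is `Ω`
    (i0 : ι 0) (h0 : ∀ i : ι 0, a 0 i = Set.univ)
    -- conditional measures: coordinate `(n, i)` is distributed as `P_{a n i}` on atoms of
    -- `F (n+1)` inside `a n i`
    (ν : (n : ℕ) → ι n → Measure (ι (n + 1)))
    (hν : ∀ n i j, ν n i {j} = P (a n i ∩ a (n + 1) j) / P (a n i))
    -- the product measure, characterized on finite cylinders
    (μprod : Measure ((n : ℕ) → ι n → ι (n + 1)))
    (hμprod : ∀ (s : Finset ((n : ℕ) × ι n)) (t : (p : (n : ℕ) × ι n) → Set (ι (p.1 + 1))),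
      μprod {φ | ∀ p ∈ s, φ p.1 p.2 ∈ t p} = ∏ p ∈ s, ν p.1 p.2 (t p)) :
    -- `iter φ n` is the atom-index reached after `n` steps of the iterated evaluation
    let iter : ((n : ℕ) → ι n → ι (n + 1)) → (n : ℕ) → ι n := fun φ n =>
      Nat.rec (motive := fun k => ι k) i0 (fun k j => φ k j) n
    -- the canonical filtration on the product space
    let G : ℕ → MeasurableSpace ((n : ℕ) → ι n → ι (n + 1)) := fun n =>
      MeasurableSpace.comap
        (fun φ => fun p : {p : (k : ℕ) × ι k // p.1 < n} => φ p.1.1 p.1.2) inferInstance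
    -- preimages of atoms have the right (telescoping) measure
    (∀ c : (n : ℕ) → ι n, c 0 = i0 →
      (∀ n < N, a (n + 1) (c (n + 1)) ⊆ a n (c n)) →
      μprod {φ | iter φ N = c N}
          = P (a 0 (c 0)) * ∏ n ∈ Finset.range N, P (a (n + 1) (c (n + 1))) / P (a n (c n)) ∧
      μprod {φ | iter φ N = c N} = P (a N (c N))) ∧
    -- `π` is measure-preserving
    (∀ U : Set Ω, MeasurableSet[F N] U → μprod {φ | a N (iter φ N) ⊆ U} = P U) ∧
    -- `π⁻¹(U)` is measurable at level `n` of the canonical filtration, for `U ∈ F n`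
    (∀ n ≤ N, ∀ U : Set Ω, MeasurableSet[F n] U →
      MeasurableSet[G n] {φ | a n (iter φ n) ⊆ U}) := by
  intro iter G
  have hmeas : ∀ n i, MeasurableSet (a n i) := fun n i =>
    hF_le n _ (hF n ▸ MeasurableSpace.measurableSet_generateFrom ⟨i, rfl⟩)
  have hι0 : ∀ i, i = i0 := fun i => by
    by_contra hi
    obtain ⟨x⟩ := nonempty_of_isProbabilityMeasure P
    exact (ha_disj 0 hi).ne_of_mem (h0 i ▸ mem_univ x) (h0 i0 ▸ mem_univ x) rfl
  have hmarg : ∀ n j, μprod {φ | iterEval i0 φ n = j} = P (a n j) := by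
    intro n
    induction n with
    | zero =>
      intro j
      rw [hι0 j, h0, measure_univ]
      simpa using hμprod ∅ fun _ => ∅
    | succ n ih =>
      intro j
      rw [measure_iterEval_succ i0 hμprod, ← tsum_measure_inter_eq P (ha_disj n) (ha_cover n)
        (hmeas n) (hmeas (n + 1) j)]
      refine tsum_congr fun i => ?_
      rw [ih, hν, ENNReal.mul_div_cancel (ha_pos n i).ne' (measure_ne_top P _)]
  refine ⟨fun c _ _ => ⟨?_, hmarg N (c N)⟩, fun U hU => ?_, fun n _ U _ => ?_⟩
  · exact (hmarg N (c N)).trans (ENNReal.mul_prod_range_div (fun n => P (a n (c n)))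
      (fun n => (ha_pos n (c n)).ne') (fun n => measure_ne_top P _) N).symm
  · calc μprod {φ | a N (iter φ N) ⊆ U}
        = ∑' j : {j | a N j ⊆ U}, μprod {φ | iterEval i0 φ N = j} :=
          (tsum_measure_preimage_singleton (μ := μprod) (f := fun φ => iterEval i0 φ N)
            (to_countable {j | a N j ⊆ U})
            fun j _ => measurableSet_setOf_iterEval_eq i0 N j).symm
      _ = ∑' j : {j | a N j ⊆ U}, P (a N j) := tsum_congr fun j => hmarg N j
      _ = P U := (measure_eq_tsum_of_measurableSet_generateFrom P (ha_disj N) (ha_cover N)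
          (hmeas N) (hF N ▸ hU)).symm
  · exact measurable_iterEval i0 n (to_countable {j | a n j ⊆ U}).measurableSet

/-- The one-parameter construction: for an atomic filtration `F n = σ(a n)` on a discrete
probability space (with `F 0` trivial), the iterated evaluation map
`π (φ₁, …, φ_N) = φ_N(φ_{N-1}(⋯ φ₁(Ω) ⋯))` on the product
`⨂_{n=1}^N ⨂_{A ∈ at F_{n-1}} (A, F_n ∩ A, P_A)` satisfies: the preimage of an atom `A_N`
with ancestor chain `A_0 = Ω ⊇ A_1 ⊇ ⋯ ⊇ A_N` has measure
`P(A_0) ∏_{n=1}^N P(A_n)/P(A_{n-1}) = P(A_N)`; consequently `π` is measure-preserving and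
`π⁻¹(U)` is measurable for the canonical filtration at level `n` whenever `U ∈ F n`. -/
theorem iterated_evaluation_measure_preserving
    {Ω : Type*} {m : MeasurableSpace Ω} (P : Measure Ω) [IsProbabilityMeasure P]
    [Countable Ω] [MeasurableSingletonClass Ω]
    (N : ℕ)
    (ι : ℕ → Type) [∀ n, Countable (ι n)]
    [∀ n, MeasurableSpace (ι n)] [∀ n, MeasurableSingletonClass (ι n)]
    (a : (n : ℕ) → ι n → Set Ω)
    -- each level is a countable partition into atoms of positive measure
    (ha_disj : ∀ n, Pairwise (Function.onFun Disjoint (a n)))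
    (ha_cover : ∀ n, (⋃ i, a n i) = Set.univ)
    (ha_ne : ∀ n i, (a n i).Nonempty)
    (ha_pos : ∀ n i, 0 < P (a n i))
    -- the filtration generated by the atoms
    (F : ℕ → MeasurableSpace Ω)
    (hF : ∀ n, F n = MeasurableSpace.generateFrom (Set.range (a n)))
    (hF_mono : ∀ n, F n ≤ F (n + 1)) (hF_le : ∀ n, F n ≤ m)
    -- `F 0` is trivial: its unique atom is `Ω`
    (i0 : ι 0) (h0 : ∀ i : ι 0, a 0 i = Set.univ)
    -- conditional measures: coordinate `(n, i)` is distributed as `P_{a n i}` on atoms of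
    -- `F (n+1)` inside `a n i`
    (ν : (n : ℕ) → ι n → Measure (ι (n + 1)))
    (hν : ∀ n i j, ν n i {j} = P (a n i ∩ a (n + 1) j) / P (a n i))
    -- the product measure, characterized on finite cylinders
    (μprod : Measure ((n : ℕ) → ι n → ι (n + 1)))
    (hμprod : ∀ (s : Finset ((n : ℕ) × ι n)) (t : (p : (n : ℕ) × ι n) → Set (ι (p.1 + 1))),
      μprod {φ | ∀ p ∈ s, φ p.1 p.2 ∈ t p} = ∏ p ∈ s, ν p.1 p.2 (t p)) :
    -- `iter φ n` is the atom-index reached after `n` steps of the iterated evaluation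
    let iter : ((n : ℕ) → ι n → ι (n + 1)) → (n : ℕ) → ι n := fun φ n =>
      Nat.rec (motive := fun k => ι k) i0 (fun k j => φ k j) n
    -- the canonical filtration on the product space
    let G : ℕ → MeasurableSpace ((n : ℕ) → ι n → ι (n + 1)) := fun n =>
      MeasurableSpace.comap
        (fun φ => fun p : {p : (k : ℕ) × ι k // p.1 < n} => φ p.1.1 p.1.2) inferInstance
    -- preimages of atoms have the right (telescoping) measure
    (∀ c : (n : ℕ) → ι n, c 0 = i0 →
      (∀ n < N, a (n + 1) (c (n + 1)) ⊆ a n (c n)) →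
      μprod {φ | iter φ N = c N}
          = P (a 0 (c 0)) * ∏ n ∈ Finset.range N, P (a (n + 1) (c (n + 1))) / P (a n (c n)) ∧
      μprod {φ | iter φ N = c N} = P (a N (c N))) ∧
    -- `π` is measure-preserving
    (∀ U : Set Ω, MeasurableSet[F N] U → μprod {φ | a N (iter φ N) ⊆ U} = P U) ∧
    -- `π⁻¹(U)` is measurable at level `n` of the canonical filtration, for `U ∈ F n`
    (∀ n ≤ N, ∀ U : Set Ω, MeasurableSet[F n] U →
      MeasurableSet[G n] {φ | a n (iter φ n) ⊆ U}) :=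
  iterated_evaluation_measure_preserving_general P N ι a ha_disj ha_cover ha_pos F hF hF_le i0 h0 ν
    hν μprod hμprod
end

section
/- Let (F_{i,j}) be a biparameter filtration on a probability space satisfying the (F4) condition. For integrable f, the (F4) condition E(E(f | F_{i,j}) | F_{i',j'}) = E(f | F_{min(i,i'), min(j,j')}) holds for all i,j,i',j' if and only if for every i, j, the σ-fields F_{i,j+1} and F_{i+1,j} are conditionally independent given F_{i,j}. -/
open MeasureTheory

/-!
If `m₀ ≤ m₁` and `m₀ ≤ m₂`, conditional independence of `m₁` and `m₂` given `m₀` is equivalent to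
`μ[h | m₁] = μ[h | m₀]` for bounded `m₂`-measurable `h`; testing against indicators and using the
self-adjointness of conditional expectation, it then gives `μ[g | m₂] = μ[g | m₀]` for every
integrable `m₁`-measurable `g`.

For `F i j ≤ F i (j + 1), F (i + 1) j`, the first form is (F4) at `(i + 1, j), (i, j + 1)`.
Conversely, for `i ≤ i'` and `j' ≤ j`, the second form, iterated by induction on `j` and then on
`i'`, shows `μ[g | F i' j'] = μ[g | F i j']` for `F i j`-measurable `g`, and the tower property
turns this into (F4). The case `i' ≤ i`, `j ≤ j'` is the same argument for the transposed
filtration, and the two remaining cases are immediate.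
-/

section CondIndep

variable {Ω : Type*} {m₀ m₁ m₂ m : MeasurableSpace Ω} {μ : Measure Ω}

/-- Conditional independence tested on bounded real functions; Mathlib's
`ProbabilityTheory.CondIndep` would require a standard Borel space. -/
def BddCondIndep (μ : Measure Ω) (m₀ m₁ m₂ : MeasurableSpace Ω) : Prop :=
  ∀ g h : Ω → ℝ, (∃ C : ℝ, ∀ ω, |g ω| ≤ C) → (∃ C : ℝ, ∀ ω, |h ω| ≤ C) →
    Measurable[m₁] g → Measurable[m₂] h →
    μ[(fun ω => g ω * h ω) | m₀] =ᵐ[μ] fun ω => (μ[g | m₀]) ω * (μ[h | m₀]) ω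

theorem BddCondIndep.symm (hci : BddCondIndep μ m₀ m₁ m₂) : BddCondIndep μ m₀ m₂ m₁ := by
  intro g h hg hh hgm hhm
  simpa only [mul_comm] using hci h g hh hg hhm hgm

theorem abs_indicator_one_le_one (s : Set Ω) (ω : Ω) : |s.indicator (1 : Ω → ℝ) ω| ≤ 1 := by
  by_cases hω : ω ∈ s <;> simp [hω]

theorem integrable_of_abs_le [IsFiniteMeasure μ] (hm₁ : m₁ ≤ m) {g : Ω → ℝ} {C : ℝ}
    (hgm : Measurable[m₁] g) (hC : ∀ ω, |g ω| ≤ C) : Integrable g μ :=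
  .of_bound (hgm.mono hm₁ le_rfl).aestronglyMeasurable C (ae_of_all μ hC)

theorem integral_mul_indicator_one {s : Set Ω} (hs : MeasurableSet s) (f : Ω → ℝ) :
    ∫ ω, f ω * s.indicator 1 ω ∂μ = ∫ ω in s, f ω ∂μ := by
  rw [← integral_indicator hs]
  congr 1 with ω
  rw [← Set.indicator_mul_right]
  simp only [Pi.one_apply, mul_one]

theorem integral_mul_condExp_of_stronglyMeasurable (hm₀ : m₀ ≤ m) [SigmaFinite (μ.trim hm₀)]
    {f g : Ω → ℝ} (hg : StronglyMeasurable[m₀] g) (hf : Integrable f μ)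
    (hgf : Integrable (fun ω => g ω * f ω) μ) :
    ∫ ω, g ω * (μ[f | m₀]) ω ∂μ = ∫ ω, g ω * f ω ∂μ :=
  calc ∫ ω, g ω * (μ[f | m₀]) ω ∂μ = ∫ ω, (μ[fun ω => g ω * f ω | m₀]) ω ∂μ :=
        integral_congr_ae (condExp_mul_of_stronglyMeasurable_left hg hgf hf).symm
    _ = ∫ ω, g ω * f ω ∂μ := integral_condExp hm₀

theorem integral_mul_condExp_eq_integral_condExp_mul [IsFiniteMeasure μ] (hm₀ : m₀ ≤ m)
    {f k : Ω → ℝ} {R : ℝ} (hf : Integrable f μ) (hk : AEStronglyMeasurable k μ)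
    (hkR : ∀ᵐ ω ∂μ, |k ω| ≤ R) :
    ∫ ω, f ω * (μ[k | m₀]) ω ∂μ = ∫ ω, (μ[f | m₀]) ω * k ω ∂μ := by
  have hk_int : Integrable k μ := .of_bound hk R hkR
  have hcondk_bdd : ∀ᵐ ω ∂μ, |(μ[k | m₀]) ω| ≤ R := ae_bdd_abs_condExp_of_ae_bdd_abs hkR
  calc ∫ ω, f ω * (μ[k | m₀]) ω ∂μ = ∫ ω, (μ[k | m₀]) ω * f ω ∂μ := by simp only [mul_comm]
    _ = ∫ ω, (μ[k | m₀]) ω * (μ[f | m₀]) ω ∂μ :=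
        (integral_mul_condExp_of_stronglyMeasurable hm₀ stronglyMeasurable_condExp hf
          (hf.bdd_mul (stronglyMeasurable_condExp.mono hm₀).aestronglyMeasurable hcondk_bdd)).symm
    _ = ∫ ω, (μ[f | m₀]) ω * (μ[k | m₀]) ω ∂μ := by simp only [mul_comm]
    _ = ∫ ω, (μ[f | m₀]) ω * k ω ∂μ :=
        integral_mul_condExp_of_stronglyMeasurable hm₀ stronglyMeasurable_condExp hk_int
          (integrable_condExp.mul_bdd hk hkR)

theorem BddCondIndep.condExp_eq_of_abs_le [IsFiniteMeasure μ] (hci : BddCondIndep μ m₀ m₁ m₂)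
    (h₀₁ : m₀ ≤ m₁) (hm₁ : m₁ ≤ m) (hm₂ : m₂ ≤ m) {h : Ω → ℝ} {C : ℝ} (hC : ∀ ω, |h ω| ≤ C)
    (hhm : Measurable[m₂] h) : μ[h | m₁] =ᵐ[μ] μ[h | m₀] := by
  have hm₀ : m₀ ≤ m := h₀₁.trans hm₁
  have hh : Integrable h μ := integrable_of_abs_le hm₂ hhm hC
  refine (ae_eq_condExp_of_forall_setIntegral_eq hm₁ hh
    (fun _ _ _ => integrable_condExp.integrableOn) (fun t ht _ => ?_)
    (stronglyMeasurable_condExp.mono h₀₁).aestronglyMeasurable).symm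
  have hind : Measurable[m₁] (t.indicator (1 : Ω → ℝ)) := measurable_const.indicator ht
  have hind_bdd : ∀ᵐ ω ∂μ, |t.indicator (1 : Ω → ℝ) ω| ≤ 1 :=
    ae_of_all μ (abs_indicator_one_le_one t)
  calc ∫ ω in t, (μ[h | m₀]) ω ∂μ = ∫ ω, (μ[h | m₀]) ω * t.indicator 1 ω ∂μ :=
        (integral_mul_indicator_one (hm₁ t ht) _).symm
    _ = ∫ ω, (μ[h | m₀]) ω * (μ[t.indicator 1 | m₀]) ω ∂μ :=
        (integral_mul_condExp_of_stronglyMeasurable hm₀ stronglyMeasurable_condExp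
          (integrable_of_abs_le hm₁ hind (abs_indicator_one_le_one t))
          (integrable_condExp.mul_bdd (hind.mono hm₁ le_rfl).aestronglyMeasurable
            hind_bdd)).symm
    _ = ∫ ω, (μ[fun ω => h ω * t.indicator 1 ω | m₀]) ω ∂μ :=
        integral_congr_ae (hci.symm h _ ⟨C, hC⟩ ⟨1, abs_indicator_one_le_one t⟩ hhm hind).symm
    _ = ∫ ω, h ω * t.indicator 1 ω ∂μ := integral_condExp hm₀
    _ = ∫ ω in t, h ω ∂μ := integral_mul_indicator_one (hm₁ t ht) h

theorem bddCondIndep_iff_condExp_eq [IsFiniteMeasure μ] (h₀₁ : m₀ ≤ m₁) (hm₁ : m₁ ≤ m)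
    (hm₂ : m₂ ≤ m) :
    BddCondIndep μ m₀ m₁ m₂ ↔ ∀ h : Ω → ℝ, (∃ C : ℝ, ∀ ω, |h ω| ≤ C) → Measurable[m₂] h →
      μ[h | m₁] =ᵐ[μ] μ[h | m₀] := by
  refine ⟨fun hci h ⟨C, hC⟩ hhm => hci.condExp_eq_of_abs_le h₀₁ hm₁ hm₂ hC hhm, ?_⟩
  intro hproj g h ⟨Cg, hCg⟩ ⟨Ch, hCh⟩ hgm hhm
  calc μ[fun ω => g ω * h ω | m₀]
      =ᵐ[μ] μ[μ[fun ω => g ω * h ω | m₁] | m₀] := (condExp_condExp_of_le h₀₁ hm₁).symm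
    _ =ᵐ[μ] μ[fun ω => g ω * (μ[h | m₁]) ω | m₀] :=
        condExp_congr_ae (condExp_stronglyMeasurable_mul_of_bound hm₁ hgm.stronglyMeasurable
          (integrable_of_abs_le hm₂ hhm hCh) Cg (ae_of_all μ hCg))
    _ =ᵐ[μ] μ[fun ω => g ω * (μ[h | m₀]) ω | m₀] :=
        condExp_congr_ae ((hproj h ⟨Ch, hCh⟩ hhm).mono fun ω hω => by simp only [hω])
    _ =ᵐ[μ] fun ω => (μ[g | m₀]) ω * (μ[h | m₀]) ω :=
        condExp_mul_of_stronglyMeasurable_right stronglyMeasurable_condExp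
          (integrable_condExp.bdd_mul (hgm.mono hm₁ le_rfl).aestronglyMeasurable
            (ae_of_all μ hCg)) (integrable_of_abs_le hm₁ hgm hCg)

theorem condExp_eq_of_condExp_indicator_eq [IsFiniteMeasure μ] (h₀₂ : m₀ ≤ m₂) (hm₁ : m₁ ≤ m)
    (hm₂ : m₂ ≤ m)
    (hind : ∀ s, MeasurableSet[m₂] s →
      μ[s.indicator (1 : Ω → ℝ) | m₁] =ᵐ[μ] μ[s.indicator 1 | m₀])
    {g : Ω → ℝ} (hg : Integrable g μ) (hgm : StronglyMeasurable[m₁] g) :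
    μ[g | m₂] =ᵐ[μ] μ[g | m₀] := by
  refine (ae_eq_condExp_of_forall_setIntegral_eq hm₂ hg
    (fun _ _ _ => integrable_condExp.integrableOn) (fun s hs _ => ?_)
    (stronglyMeasurable_condExp.mono h₀₂).aestronglyMeasurable).symm
  have hs_meas : AEStronglyMeasurable (s.indicator (1 : Ω → ℝ)) μ :=
    ((measurable_const.indicator hs).mono hm₂ le_rfl).aestronglyMeasurable
  have hs_bdd : ∀ᵐ ω ∂μ, |s.indicator (1 : Ω → ℝ) ω| ≤ 1 :=
    ae_of_all μ (abs_indicator_one_le_one s)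
  calc ∫ ω in s, (μ[g | m₀]) ω ∂μ = ∫ ω, (μ[g | m₀]) ω * s.indicator 1 ω ∂μ :=
        (integral_mul_indicator_one (hm₂ s hs) _).symm
    _ = ∫ ω, g ω * (μ[s.indicator 1 | m₀]) ω ∂μ :=
        (integral_mul_condExp_eq_integral_condExp_mul (h₀₂.trans hm₂) hg hs_meas hs_bdd).symm
    _ = ∫ ω, g ω * (μ[s.indicator 1 | m₁]) ω ∂μ :=
        integral_congr_ae ((hind s hs).mono fun ω hω => by simp only [hω])
    _ = ∫ ω, (μ[g | m₁]) ω * s.indicator 1 ω ∂μ :=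
        integral_mul_condExp_eq_integral_condExp_mul hm₁ hg hs_meas hs_bdd
    _ = ∫ ω in s, g ω ∂μ := by
        rw [condExp_of_stronglyMeasurable hm₁ hgm hg, integral_mul_indicator_one (hm₂ s hs)]

theorem BddCondIndep.condExp_eq [IsFiniteMeasure μ] (hci : BddCondIndep μ m₀ m₁ m₂)
    (h₀₁ : m₀ ≤ m₁) (h₀₂ : m₀ ≤ m₂) (hm₁ : m₁ ≤ m) (hm₂ : m₂ ≤ m)
    {g : Ω → ℝ} (hg : Integrable g μ) (hgm : StronglyMeasurable[m₁] g) :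
    μ[g | m₂] =ᵐ[μ] μ[g | m₀] :=
  condExp_eq_of_condExp_indicator_eq h₀₂ hm₁ hm₂
    (fun s hs => hci.condExp_eq_of_abs_le h₀₁ hm₁ hm₂ (abs_indicator_one_le_one s)
      (measurable_const.indicator hs)) hg hgm

end CondIndep

section Biparameter

variable {Ω : Type*} {m : MeasurableSpace Ω} {μ : Measure Ω} [IsFiniteMeasure μ]
  {F : ℕ → ℕ → MeasurableSpace Ω}

theorem biFiltration_mono (hmono₁ : ∀ i j, F i j ≤ F (i + 1) j)
    (hmono₂ : ∀ i j, F i j ≤ F i (j + 1))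
    {i i' j j' : ℕ} (hi : i ≤ i') (hj : j ≤ j') : F i j ≤ F i' j' :=
  (monotone_nat_of_le_succ (hmono₁ · j) hi).trans (monotone_nat_of_le_succ (hmono₂ i' ·) hj)

variable (hle : ∀ i j, F i j ≤ m) (hmono₁ : ∀ i j, F i j ≤ F (i + 1) j)
  (hmono₂ : ∀ i j, F i j ≤ F i (j + 1))
  (hci : ∀ i j, BddCondIndep μ (F i j) (F i (j + 1)) (F (i + 1) j))
include hle hmono₁ hmono₂ hci

theorem condExp_succ_left_eq {i j' j : ℕ} (hj : j' ≤ j) {g : Ω → ℝ} (hg : Integrable g μ)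
    (hgm : StronglyMeasurable[F i j] g) : μ[g | F (i + 1) j'] =ᵐ[μ] μ[g | F i j'] := by
  induction j, hj using Nat.le_induction generalizing g with
  | base =>
    rw [condExp_of_stronglyMeasurable (hle _ _) (hgm.mono (hmono₁ i j')) hg,
      condExp_of_stronglyMeasurable (hle _ _) hgm hg]
  | succ j hj ih =>
    have hF : ∀ i, F i j' ≤ F i j := fun i => biFiltration_mono hmono₁ hmono₂ le_rfl hj
    calc μ[g | F (i + 1) j'] =ᵐ[μ] μ[μ[g | F (i + 1) j] | F (i + 1) j'] :=
          (condExp_condExp_of_le (hF _) (hle _ _)).symm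
      _ =ᵐ[μ] μ[μ[g | F i j] | F (i + 1) j'] := condExp_congr_ae
          ((hci i j).condExp_eq (hmono₂ i j) (hmono₁ i j) (hle _ _) (hle _ _) hg hgm)
      _ =ᵐ[μ] μ[μ[g | F i j] | F i j'] := ih integrable_condExp stronglyMeasurable_condExp
      _ =ᵐ[μ] μ[g | F i j'] := condExp_condExp_of_le (hF _) (hle _ _)

theorem condExp_eq_of_le_of_ge {i i' j j' : ℕ} (hi : i ≤ i') (hj : j' ≤ j) {g : Ω → ℝ}
    (hg : Integrable g μ) (hgm : StronglyMeasurable[F i j] g) :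
    μ[g | F i' j'] =ᵐ[μ] μ[g | F i j'] := by
  induction i', hi using Nat.le_induction with
  | base => rfl
  | succ i' hi ih =>
    exact (condExp_succ_left_eq hle hmono₁ hmono₂ hci hj hg
      (hgm.mono (biFiltration_mono hmono₁ hmono₂ hi le_rfl))).trans ih

theorem condExp_condExp_of_le_of_ge {i i' j j' : ℕ} (hi : i ≤ i') (hj : j' ≤ j) (f : Ω → ℝ) :
    μ[μ[f | F i j] | F i' j'] =ᵐ[μ] μ[f | F i j'] :=
  (condExp_eq_of_le_of_ge hle hmono₁ hmono₂ hci hi hj integrable_condExp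
    stronglyMeasurable_condExp).trans
    (condExp_condExp_of_le (biFiltration_mono hmono₁ hmono₂ le_rfl hj) (hle _ _))

theorem condExp_condExp_eq_condExp_min (f : Ω → ℝ) (i j i' j' : ℕ) :
    μ[μ[f | F i j] | F i' j'] =ᵐ[μ] μ[f | F (min i i') (min j j')] := by
  rcases le_total i i' with hi | hi <;> rcases le_total j j' with hj | hj
  · rw [min_eq_left hi, min_eq_left hj, condExp_of_stronglyMeasurable (hle _ _)
      (stronglyMeasurable_condExp.mono (biFiltration_mono hmono₁ hmono₂ hi hj)) integrable_condExp]
  · rw [min_eq_left hi, min_eq_right hj]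
    exact condExp_condExp_of_le_of_ge hle hmono₁ hmono₂ hci hi hj f
  · rw [min_eq_right hi, min_eq_left hj]
    exact condExp_condExp_of_le_of_ge (F := fun i j => F j i) (fun i j => hle j i)
      (fun i j => hmono₂ j i) (fun i j => hmono₁ j i) (fun i j => (hci j i).symm) hj hi f
  · rw [min_eq_right hi, min_eq_right hj]
    exact condExp_condExp_of_le (biFiltration_mono hmono₁ hmono₂ hi hj) (hle _ _)

end Biparameter

/-- The (F4) condition of Cairoli–Walsh is equivalent to conditional independence:
`E(E(f|F_{i,j})|F_{i',j'}) = E(f|F_{min(i,i'),min(j,j')})` for all integrable `f` holds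
iff for every `i, j` the σ-fields `F_{i,j+1}` and `F_{i+1,j}` are conditionally
independent given `F_{i,j}` (in the sense of bounded measurable test functions). -/
theorem F4_iff_condIndep
    {Ω : Type*} {m : MeasurableSpace Ω} (μ : Measure Ω) [IsProbabilityMeasure μ]
    (F : ℕ → ℕ → MeasurableSpace Ω)
    (hle : ∀ i j, F i j ≤ m)
    (hmono₁ : ∀ i j, F i j ≤ F (i + 1) j) (hmono₂ : ∀ i j, F i j ≤ F i (j + 1)) :
    (∀ f : Ω → ℝ, Integrable f μ → ∀ i j i' j',
        μ[ (μ[f | F i j]) | F i' j'] =ᵐ[μ] μ[f | F (min i i') (min j j')])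
    ↔
    (∀ i j, ∀ g h : Ω → ℝ,
        (∃ C : ℝ, ∀ ω, |g ω| ≤ C) → (∃ C : ℝ, ∀ ω, |h ω| ≤ C) →
        Measurable[F i (j + 1)] g → Measurable[F (i + 1) j] h →
        μ[ (fun ω => g ω * h ω) | F i j] =ᵐ[μ]
          fun ω => (μ[g | F i j]) ω * (μ[h | F i j]) ω) := by
  refine ⟨fun hF4 i j => ?_, fun hci f _ =>
    condExp_condExp_eq_condExp_min hle hmono₁ hmono₂ hci f⟩
  refine (bddCondIndep_iff_condExp_eq (hmono₂ i j) (hle _ _) (hle _ _)).2 fun h ⟨C, hC⟩ hhm => ?_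
  have hh : Integrable h μ := integrable_of_abs_le (hle _ _) hhm hC
  have hF4ij := hF4 h hh (i + 1) j i (j + 1)
  rwa [min_eq_right i.le_succ, min_eq_left j.le_succ,
    condExp_of_stronglyMeasurable (hle _ _) hhm.stronglyMeasurable hh] at hF4ij
end

section
/- Let (S, 𝒮, μ) = ⨂_{i,j=0}^∞ (S_{i,j}, 𝒮_{i,j}, μ_{i,j}) be a doubly indexed product probability space and let F_{i,j} be the σ-field generated by the projection s ↦ (s_{i',j'} : i' ≤ i, j' ≤ j). Then (F_{i,j}) satisfies the (F4) condition, i.e. F_{i,j+1} and F_{i+1,j} are conditionally independent given F_{i,j}. -/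
/-!
`F i j` is generated by the coordinates in the rectangle `Iic (i, j)`. Passing to `F (i + 1) j`
adds the coordinates of the column `D = {i + 1} × Iic j`, which is disjoint from the rectangle
`Iic (i, j + 1)` of `F i (j + 1)`; since the coordinates are independent, `σ(D)` is independent
of `F i (j + 1)`. Hence an `F i (j + 1)`-measurable `g` satisfies
`E[g | F i j ⊔ σ(D)] = E[g | F i j]`, and by the tower property
`E[g h | F i j] = E[E[g | F i j] h | F i j] = E[g | F i j] E[h | F i j]`.
-/

open MeasureTheory ProbabilityTheory MeasurableSpace

section CondExpIndep

variable {Ω : Type*} {m₁ m₂ : MeasurableSpace Ω}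

lemma isPiSystem_image2_inter_measurableSet :
    IsPiSystem (Set.image2 (· ∩ ·) {s | MeasurableSet[m₁] s} {t | MeasurableSet[m₂] t}) := by
  rintro _ ⟨s₁, hs₁, t₁, ht₁, rfl⟩ _ ⟨s₂, hs₂, t₂, ht₂, rfl⟩ -
  refine ⟨s₁ ∩ s₂, hs₁.inter hs₂, t₁ ∩ t₂, ht₁.inter ht₂, ?_⟩
  exact Set.inter_inter_inter_comm s₁ s₂ t₁ t₂

lemma sup_eq_generateFrom_image2_inter :
    m₁ ⊔ m₂ =
      generateFrom (Set.image2 (· ∩ ·) {s | MeasurableSet[m₁] s} {t | MeasurableSet[m₂] t}) := by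
  refine le_antisymm (sup_le ?_ ?_) (generateFrom_le ?_)
  · exact fun s hs => measurableSet_generateFrom ⟨s, hs, Set.univ, .univ, Set.inter_univ s⟩
  · exact fun t ht => measurableSet_generateFrom ⟨Set.univ, .univ, t, ht, Set.univ_inter t⟩
  · rintro _ ⟨s, hs, t, ht, rfl⟩
    exact (le_sup_left (b := m₂) s hs).inter (le_sup_right (a := m₁) t ht)

variable {mA mC mD m0 : MeasurableSpace Ω} {μ : Measure Ω} {f g h : Ω → ℝ}

lemma setIntegral_inter_eq_measureReal_mul_of_indep (hA : mA ≤ m0) (hD : mD ≤ m0)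
    (hindep : Indep mA mD μ) (hf : StronglyMeasurable[mA] f) {u v : Set Ω}
    (hu : MeasurableSet[mA] u) (hv : MeasurableSet[mD] v) :
    ∫ x in u ∩ v, f x ∂μ = μ.real v * ∫ x in u, f x ∂μ := by
  have hfu : Measurable[mA] (u.indicator f) := hf.measurable.indicator hu
  have hv1 : Measurable[mD] (v.indicator (1 : Ω → ℝ)) := measurable_const.indicator hv
  have hindep_fun : IndepFun (u.indicator f) (v.indicator 1) μ :=
    indep_of_indep_of_le_right (indep_of_indep_of_le_left hindep hfu.comap_le) hv1.comap_le
  calc ∫ x in u ∩ v, f x ∂μ = ∫ x, (u.indicator f * v.indicator (1 : Ω → ℝ)) x ∂μ := by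
        rw [← integral_indicator ((hA u hu).inter (hD v hv))]
        congr 1
        ext x
        by_cases hxu : x ∈ u <;> by_cases hxv : x ∈ v <;> simp [hxu, hxv]
    _ = (∫ x in u, f x ∂μ) * μ.real v := by
        rw [hindep_fun.integral_mul_eq_mul_integral (hfu.mono hA le_rfl).aestronglyMeasurable
          (hv1.mono hD le_rfl).aestronglyMeasurable, integral_indicator (hA u hu),
          integral_indicator_one (hD v hv)]
    _ = μ.real v * ∫ x in u, f x ∂μ := mul_comm _ _

theorem condExp_sup_ae_eq_condExp_of_indep [IsFiniteMeasure μ] (hCA : mC ≤ mA)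
    (hA : mA ≤ m0) (hD : mD ≤ m0) (hindep : Indep mA mD μ) (hg : StronglyMeasurable[mA] g) :
    μ[g | mC ⊔ mD] =ᵐ[μ] μ[g | mC] := by
  by_cases hgi : Integrable g μ
  swap
  · rw [condExp_of_not_integrable hgi, condExp_of_not_integrable hgi]
  have hC : mC ≤ m0 := hCA.trans hA
  have hCD : mC ⊔ mD ≤ m0 := sup_le hC hD
  have h_setIntegral : ∀ s, MeasurableSet[mC ⊔ mD] s →
      ∫ x in s, μ[g | mC] x ∂μ = ∫ x in s, g x ∂μ := by
    intro s hs
    induction s, hs using induction_on_inter sup_eq_generateFrom_image2_inter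
      isPiSystem_image2_inter_measurableSet with
    | empty => simp
    | basic _ huv =>
      obtain ⟨u, hu, v, hv, rfl⟩ := huv
      rw [setIntegral_inter_eq_measureReal_mul_of_indep hA hD hindep
          (stronglyMeasurable_condExp.mono hCA) (hCA u hu) hv,
        setIntegral_inter_eq_measureReal_mul_of_indep hA hD hindep hg (hCA u hu) hv,
        setIntegral_condExp hC hgi hu]
    | compl t ht ih =>
      rw [setIntegral_compl (hCD t ht) integrable_condExp, setIntegral_compl (hCD t ht) hgi, ih,
        integral_condExp hC]
    | iUnion t hdisj ht ih =>
      rw [integral_iUnion (fun n => hCD _ (ht n)) hdisj integrable_condExp.integrableOn,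
        integral_iUnion (fun n => hCD _ (ht n)) hdisj hgi.integrableOn]
      exact tsum_congr ih
  exact (ae_eq_condExp_of_forall_setIntegral_eq hCD hgi
    (fun _ _ _ => integrable_condExp.integrableOn) (fun s hs _ => h_setIntegral s hs)
    (stronglyMeasurable_condExp.mono (le_sup_left : mC ≤ mC ⊔ mD)).aestronglyMeasurable).symm

theorem condExp_mul_ae_eq_mul_condExp_of_indep [IsFiniteMeasure μ] (hCA : mC ≤ mA)
    (hA : mA ≤ m0) (hD : mD ≤ m0) (hindep : Indep mA mD μ) (hg : StronglyMeasurable[mA] g)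
    (hgi : Integrable g μ) (hh : StronglyMeasurable[mC ⊔ mD] h) {c : ℝ}
    (hhb : ∀ᵐ x ∂μ, ‖h x‖ ≤ c) :
    μ[g * h | mC] =ᵐ[μ] μ[g | mC] * μ[h | mC] := by
  have hCD : mC ⊔ mD ≤ m0 := sup_le (hCA.trans hA) hD
  have hh_ae : AEStronglyMeasurable h μ := (hh.mono hCD).aestronglyMeasurable
  have hhi : Integrable h μ := .of_bound hh_ae c hhb
  calc μ[g * h | mC] =ᵐ[μ] μ[μ[g * h | mC ⊔ mD] | mC] :=
        (condExp_condExp_of_le le_sup_left hCD).symm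
    _ =ᵐ[μ] μ[μ[g | mC] * h | mC] := by
      refine condExp_congr_ae ?_
      filter_upwards [condExp_mul_of_stronglyMeasurable_right hh (hgi.mul_bdd hh_ae hhb) hgi,
        condExp_sup_ae_eq_condExp_of_indep hCA hA hD hindep hg] with x hgh hg'
      rw [hgh, Pi.mul_apply, Pi.mul_apply, hg']
    _ =ᵐ[μ] μ[g | mC] * μ[h | mC] :=
      condExp_mul_of_stronglyMeasurable_left stronglyMeasurable_condExp
        (integrable_condExp.mul_bdd hh_ae hhb) hhi

end CondExpIndep

abbrev coordMeasurableSpace {ι : Type*} (X : ι → Type*) [∀ i, MeasurableSpace (X i)]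
    (I : Set ι) : MeasurableSpace (∀ i, X i) :=
  ⨆ i ∈ I, MeasurableSpace.comap (fun x => x i) inferInstance

section CoordinateSigmaAlgebra

variable {ι : Type*} {X : ι → Type*} [∀ i, MeasurableSpace (X i)]

lemma coordMeasurableSpace_le (I : Set ι) : coordMeasurableSpace X I ≤ MeasurableSpace.pi :=
  iSup₂_le fun i _ => (measurable_pi_apply i).comap_le

lemma coordMeasurableSpace_mono {I J : Set ι} (hIJ : I ⊆ J) :
    coordMeasurableSpace X I ≤ coordMeasurableSpace X J :=
  biSup_mono hIJ

lemma coordMeasurableSpace_union (I J : Set ι) :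
    coordMeasurableSpace X (I ∪ J) = coordMeasurableSpace X I ⊔ coordMeasurableSpace X J :=
  iSup_union

lemma comap_restrict_eq_coordMeasurableSpace (I : Set ι) :
    MeasurableSpace.comap (fun x (q : I) => x q) inferInstance = coordMeasurableSpace X I := by
  refine le_antisymm ?_ (iSup₂_le fun i hi => ?_)
  · simp only [MeasurableSpace.pi, comap_iSup, comap_comp]
    exact iSup_le fun q =>
      le_biSup (fun i => MeasurableSpace.comap (fun x : ∀ i, X i => x i) _) q.2
  · rw [show (fun x : ∀ i, X i => x i) = (fun y : ∀ q : I, X q => y ⟨i, hi⟩) ∘ fun x q => x q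
      from rfl, ← comap_comp]
    exact comap_mono (measurable_pi_apply (⟨i, hi⟩ : I)).comap_le

lemma iIndepFun_eval_of_measure_cylinder {μ : Measure (∀ i, X i)}
    (ν : ∀ i, Measure (X i))
    (hμ : ∀ (s : Finset ι) (t : ∀ i, Set (X i)), (∀ i ∈ s, MeasurableSet (t i)) →
      μ {x | ∀ i ∈ s, x i ∈ t i} = ∏ i ∈ s, ν i (t i)) :
    iIndepFun (fun i (x : ∀ i, X i) => x i) μ := by
  rw [iIndepFun_iff_measure_inter_preimage_eq_mul]
  intro s t ht
  have h_single : ∀ i ∈ s, μ ((fun x : ∀ i, X i => x i) ⁻¹' t i) = ν i (t i) := fun i hi => by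
    have h := hμ {i} t (by simpa using ht i hi)
    simp only [Finset.mem_singleton, forall_eq, Finset.prod_singleton] at h
    exact h
  rw [Finset.prod_congr rfl h_single, ← hμ s t ht]
  congr 1
  ext x
  simp

lemma indep_coordMeasurableSpace_of_disjoint {μ : Measure (∀ i, X i)}
    (h : iIndepFun (fun i (x : ∀ i, X i) => x i) μ) {I J : Set ι} (hIJ : Disjoint I J) :
    Indep (coordMeasurableSpace X I) (coordMeasurableSpace X J) μ :=
  indep_iSup_of_disjoint (fun i => (measurable_pi_apply i).comap_le) h hIJ

end CoordinateSigmaAlgebra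

theorem double_product_filtration_F4_general
    (S : ℕ × ℕ → Type) [∀ p, MeasurableSpace (S p)]
    (μi : (p : ℕ × ℕ) → Measure (S p))
    (μ : Measure ((p : ℕ × ℕ) → S p)) [IsProbabilityMeasure μ]
    -- `μ` is the product measure: characterization on finite cylinders
    (hμ : ∀ (s : Finset (ℕ × ℕ)) (t : (p : ℕ × ℕ) → Set (S p)),
      (∀ p ∈ s, MeasurableSet (t p)) →
      μ {x | ∀ p ∈ s, x p ∈ t p} = ∏ p ∈ s, μi p (t p))
    -- the canonical biparameter filtration
    (F : ℕ → ℕ → MeasurableSpace ((p : ℕ × ℕ) → S p))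
    (hF : ∀ i j, F i j = MeasurableSpace.comap
      (fun x => fun q : {q : ℕ × ℕ // q.1 ≤ i ∧ q.2 ≤ j} => x q.1) inferInstance) :
    -- (F4): `F (i, j+1)` and `F (i+1, j)` are conditionally independent given `F (i, j)`
    ∀ i j, ∀ g h : ((p : ℕ × ℕ) → S p) → ℝ,
      (∃ C : ℝ, ∀ x, |g x| ≤ C) → (∃ C : ℝ, ∀ x, |h x| ≤ C) →
      Measurable[F i (j + 1)] g → Measurable[F (i + 1) j] h →
      μ[ (fun x => g x * h x) | F i j] =ᵐ[μ]
        fun x => (μ[g | F i j]) x * (μ[h | F i j]) x := by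
  intro i j g h ⟨Cg, hCg⟩ ⟨Ch, hCh⟩ hg hh
  have hF_Iic : ∀ i j, F i j = coordMeasurableSpace S (Set.Iic (i, j)) := fun i j =>
    (hF i j).trans (comap_restrict_eq_coordMeasurableSpace _)
  set D : Set (ℕ × ℕ) := {i + 1} ×ˢ Set.Iic j
  have h_split : Set.Iic (i + 1, j) = Set.Iic (i, j) ∪ D := by
    ext ⟨a, b⟩
    simp only [D, Set.mem_Iic, Prod.mk_le_mk, Set.mem_union, Set.mem_prod,
      Set.mem_singleton_iff]
    omega
  have h_disj : Disjoint (Set.Iic (i, j + 1)) D := by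
    rw [Set.disjoint_left]
    rintro ⟨a, b⟩ hab ⟨rfl, -⟩
    simp only [Set.mem_Iic, Prod.mk_le_mk] at hab
    omega
  have hh' :
      Measurable[coordMeasurableSpace S (Set.Iic (i, j)) ⊔ coordMeasurableSpace S D] h := by
    rwa [← coordMeasurableSpace_union, ← h_split, ← hF_Iic]
  rw [hF_Iic] at hg ⊢
  have hgi : Integrable g μ :=
    .of_bound (hg.mono (coordMeasurableSpace_le _) le_rfl).aestronglyMeasurable Cg
      (ae_of_all _ fun x => (Real.norm_eq_abs _).trans_le (hCg x))
  exact condExp_mul_ae_eq_mul_condExp_of_indep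
    (coordMeasurableSpace_mono (Set.Iic_subset_Iic.2 (by simp))) (coordMeasurableSpace_le _)
    (coordMeasurableSpace_le _)
    (indep_coordMeasurableSpace_of_disjoint (iIndepFun_eval_of_measure_cylinder μi hμ) h_disj)
    hg.stronglyMeasurable hgi hh'.stronglyMeasurable
    (ae_of_all _ fun x => (Real.norm_eq_abs _).trans_le (hCh x))

/-- A doubly indexed product probability space with the filtration generated by the
projections `s ↦ (s_{i',j'} : i' ≤ i, j' ≤ j)` satisfies the (F4) condition:
`F_{i,j+1}` and `F_{i+1,j}` are conditionally independent given `F_{i,j}`. -/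
theorem double_product_filtration_F4
    (S : ℕ × ℕ → Type) [∀ p, MeasurableSpace (S p)]
    (μi : (p : ℕ × ℕ) → Measure (S p)) [∀ p, IsProbabilityMeasure (μi p)]
    (μ : Measure ((p : ℕ × ℕ) → S p)) [IsProbabilityMeasure μ]
    -- `μ` is the product measure: characterization on finite cylinders
    (hμ : ∀ (s : Finset (ℕ × ℕ)) (t : (p : ℕ × ℕ) → Set (S p)),
      (∀ p ∈ s, MeasurableSet (t p)) →
      μ {x | ∀ p ∈ s, x p ∈ t p} = ∏ p ∈ s, μi p (t p))
    -- the canonical biparameter filtration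
    (F : ℕ → ℕ → MeasurableSpace ((p : ℕ × ℕ) → S p))
    (hF : ∀ i j, F i j = MeasurableSpace.comap
      (fun x => fun q : {q : ℕ × ℕ // q.1 ≤ i ∧ q.2 ≤ j} => x q.1) inferInstance) :
    -- (F4): `F (i, j+1)` and `F (i+1, j)` are conditionally independent given `F (i, j)`
    ∀ i j, ∀ g h : ((p : ℕ × ℕ) → S p) → ℝ,
      (∃ C : ℝ, ∀ x, |g x| ≤ C) → (∃ C : ℝ, ∀ x, |h x| ≤ C) →
      Measurable[F i (j + 1)] g → Measurable[F (i + 1) j] h →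
      μ[ (fun x => g x * h x) | F i j] =ᵐ[μ]
        fun x => (μ[g | F i j]) x * (μ[h | F i j]) x :=
  double_product_filtration_F4_general S μi μ hμ F hF
end

section
/- Let (Ω, F, P) be a probability space with an atomic biparameter (F4)-filtration (F_{i,j}), all atoms of positive measure, and F⁻_{i,j} = F_{i−1,j} ∨ F_{i,j−1}. Suppose for each (i,j) ∈ [1,N]×[1,M], A_{i,j} is an atom of F⁻_{i,j} and B_{i,j} ⊆ A_{i,j} is an atom of F_{i,j}, with B_{i−1,j} ∩ B_{i,j−1} = A_{i,j} for i,j ≥ 2, B_{i−1,1} = A_{i,1} for i ≥ 2, B_{1,j−1} = A_{1,j} for j ≥ 2, and A_{1,1} = Ω. Then for all 1 ≤ n ≤ N, 1 ≤ m ≤ M: ∏_{i=1}^{n} ∏_{j=1}^{m} P(B_{i,j})/P(A_{i,j}) = P(B_{n,m}). -/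
/-!
Continue the chain of atoms by `B i 0 = B 0 j = Ω`. Then `A i j = B (i-1) j ∩ B i (j-1)`, and both
sets lie in the atom `B (i-1) (j-1)` of `F (i-1) (j-1)`. By (F4), conditioning `1_{B (i-1) j}` on
`F i (j-1)` gives the same result as conditioning on `F (i-1) (j-1)`, a function that is constant
on that atom; integrating it over `B i (j-1)` yields
`P(A i j) P(B (i-1) (j-1)) = P(B (i-1) j) P(B i (j-1))`.
So each factor `P(B i j) / P(A i j)` is a mixed second quotient of `(i, j) ↦ P(B i j)`, and the
double product telescopes to `P(B n m)`; atoms have positive measure, so nothing vanishes.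
-/

open MeasureTheory Function

def IsAtomOf {Ω : Type*} (m' : MeasurableSpace Ω) (A : Set Ω) : Prop :=
  MeasurableSet[m'] A ∧ A.Nonempty ∧
    ∀ B : Set Ω, MeasurableSet[m'] B → B ⊆ A → B = ∅ ∨ B = A

theorem IsAtomOf.apply_eq_of_measurable {Ω β : Type*} [MeasurableSpace β]
    [MeasurableSingletonClass β] {m' : MeasurableSpace Ω} {S : Set Ω} (hS : IsAtomOf m' S)
    {g : Ω → β} (hg : Measurable[m'] g) {x y : Ω} (hx : x ∈ S) (hy : y ∈ S) : g x = g y := by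
  have hlevel : MeasurableSet[m'] (g ⁻¹' {g x} ∩ S) := (hg (measurableSet_singleton _)).inter hS.1
  rcases hS.2.2 _ hlevel Set.inter_subset_right with hempty | hfull
  · exact (Set.eq_empty_iff_forall_notMem.mp hempty x ⟨rfl, hx⟩).elim
  · exact (hfull.symm ▸ hy : y ∈ g ⁻¹' {g x} ∩ S).1.symm

theorem subset_or_disjoint_of_measurableSet_generateFrom_s12 {Ω ι : Type*} {a : ι → Set Ω}
    (hdisj : Pairwise (Disjoint on a)) {s : Set Ω}
    (hs : MeasurableSet[MeasurableSpace.generateFrom (Set.range a)] s) (k : ι) :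
    a k ⊆ s ∨ Disjoint (a k) s := by
  induction s, hs using MeasurableSpace.generateFrom_induction with
  | hC t ht =>
    obtain ⟨l, rfl⟩ := ht
    obtain rfl | hne := eq_or_ne k l
    · exact Or.inl subset_rfl
    · exact Or.inr (hdisj hne)
  | empty => exact Or.inr (Set.disjoint_empty _)
  | compl t _ ih =>
    exact ih.symm.imp Set.subset_compl_iff_disjoint_right.mpr
      Set.disjoint_compl_right_iff_subset.mpr
  | iUnion f _ ih =>
    by_cases h : ∃ n, a k ⊆ f n
    · obtain ⟨n, hn⟩ := h
      exact Or.inl (hn.trans (Set.subset_iUnion f n))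
    · exact Or.inr (Set.disjoint_iUnion_right.mpr fun n => (ih n).resolve_left fun hn => h ⟨n, hn⟩)

theorem measure_pos_of_measurableSet_generateFrom {Ω ι : Type*} {m : MeasurableSpace Ω}
    {P : Measure Ω} {a : ι → Set Ω} (hdisj : Pairwise (Disjoint on a))
    (hcover : ⋃ k, a k = Set.univ) (hpos : ∀ k, 0 < P (a k)) {s : Set Ω}
    (hs : MeasurableSet[MeasurableSpace.generateFrom (Set.range a)] s) (hne : s.Nonempty) :
    0 < P s := by
  obtain ⟨x, hx⟩ := hne
  obtain ⟨k, hk⟩ := Set.mem_iUnion.mp (hcover ▸ Set.mem_univ x)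
  have hks : a k ⊆ s := (subset_or_disjoint_of_measurableSet_generateFrom_s12 hdisj hs k).resolve_right
    fun h => Set.disjoint_left.mp h hk hx
  exact (hpos k).trans_le (measure_mono hks)

theorem IsAtomOf.measureReal_inter_mul_eq {Ω : Type*} {m : MeasurableSpace Ω}
    {P : Measure Ω} [IsFiniteMeasure P] {G₀ G₁ G₂ : MeasurableSpace Ω}
    (h₀ : G₀ ≤ m) (h₁ : G₁ ≤ m) (h₂ : G₂ ≤ m)
    (hcond : ∀ f : Ω → ℝ, Integrable f P → P[P[f|G₁]|G₂] =ᵐ[P] P[f|G₀])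
    {S T U : Set Ω} (hS : IsAtomOf G₀ S) (hT : MeasurableSet[G₁] T) (hU : MeasurableSet[G₂] U)
    (hTS : T ⊆ S) (hUS : U ⊆ S) :
    P.real (T ∩ U) * P.real S = P.real T * P.real U := by
  set f : Ω → ℝ := T.indicator 1
  have hfint : Integrable f P := (integrable_const 1).indicator (h₁ _ hT)
  have hf₁ : P[f|G₁] = f :=
    condExp_of_stronglyMeasurable h₁ (stronglyMeasurable_one.indicator hT) hfint
  have hf₂ : P[f|G₂] =ᵐ[P] P[f|G₀] := by simpa only [hf₁] using hcond f hfint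
  have hint : ∀ V, MeasurableSet[m] V → ∫ x in V, f x ∂P = P.real (T ∩ V) := fun V hV => by
    rw [integral_indicator_one (h₁ _ hT), measureReal_restrict_apply (h₁ _ hT)]
  obtain ⟨x₀, hx₀⟩ := hS.2.1
  set c := P[f|G₀] x₀
  have hconst : ∀ V ⊆ S, MeasurableSet[m] V → ∫ x in V, P[f|G₀] x ∂P = P.real V * c :=
    fun V hVS hV => by
      rw [setIntegral_congr_fun (g := fun _ => c) hV fun x hx => hS.apply_eq_of_measurable
        stronglyMeasurable_condExp.measurable (hVS hx) hx₀, setIntegral_const, smul_eq_mul]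
  have hTc : P.real T = P.real S * c := by
    rw [← hconst S subset_rfl (h₀ _ hS.1), setIntegral_condExp h₀ hfint hS.1, hint _ (h₀ _ hS.1),
      Set.inter_eq_left.mpr hTS]
  have hTUc : P.real (T ∩ U) = P.real U * c := by
    rw [← hconst U hUS (h₂ _ hU), ← integral_congr_ae (ae_restrict_of_ae hf₂),
      setIntegral_condExp h₂ hfint hU, hint _ (h₂ _ hU)]
  rw [hTUc, hTc]
  ring

theorem Finset.prod_Icc_div_sub_one {K : Type*} [Field K] {f : ℕ → K} {n : ℕ}
    (hf : ∀ i ≤ n, f i ≠ 0) : ∏ i ∈ Finset.Icc 1 n, f i / f (i - 1) = f n / f 0 := by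
  induction n with
  | zero => simp [div_self (hf 0 le_rfl)]
  | succ n ih =>
    rw [Finset.prod_Icc_succ_top (by omega), ih fun i hi => hf i (by omega), Nat.add_sub_cancel,
      mul_comm, div_mul_div_cancel₀ (hf n (by omega))]

theorem Finset.prod_Icc_prod_Icc_div {K : Type*} [Field K] {g : ℕ → ℕ → K} {n m : ℕ}
    (hg : ∀ i ≤ n, ∀ j ≤ m, g i j ≠ 0) :
    ∏ i ∈ Finset.Icc 1 n, ∏ j ∈ Finset.Icc 1 m,
        g i j * g (i - 1) (j - 1) / (g (i - 1) j * g i (j - 1))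
      = g n m * g 0 0 / (g 0 m * g n 0) := by
  have hrow : ∀ i ≤ n, ∏ j ∈ Finset.Icc 1 m, g i j / g i (j - 1) = g i m / g i 0 :=
    fun i hi => Finset.prod_Icc_div_sub_one (hg i hi)
  calc ∏ i ∈ Finset.Icc 1 n, ∏ j ∈ Finset.Icc 1 m,
          g i j * g (i - 1) (j - 1) / (g (i - 1) j * g i (j - 1))
      = ∏ i ∈ Finset.Icc 1 n, (g i m / g i 0) / (g (i - 1) m / g (i - 1) 0) := by
        refine Finset.prod_congr rfl fun i hi => ?_
        have hi := (Finset.mem_Icc.mp hi).2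
        rw [← hrow i hi, ← hrow (i - 1) (by omega), ← Finset.prod_div_distrib]
        exact Finset.prod_congr rfl fun j _ => by simp only [div_eq_mul_inv, mul_inv, inv_inv]; ring
    _ = (g n m / g n 0) / (g 0 m / g 0 0) :=
        Finset.prod_Icc_div_sub_one fun i hi =>
          div_ne_zero (hg i hi m le_rfl) (hg i hi 0 (Nat.zero_le m))
    _ = g n m * g 0 0 / (g 0 m * g n 0) := by simp only [div_eq_mul_inv, mul_inv, inv_inv]; ring

/-- The chains of atoms continued by the paper's convention `B i 0 = B 0 j = Ω`. -/
def extendAxes {Ω : Type*} (B : ℕ → ℕ → Set Ω) (i j : ℕ) : Set Ω :=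
  if i = 0 ∨ j = 0 then Set.univ else B i j

section extendAxes

variable {Ω : Type*} {B : ℕ → ℕ → Set Ω} {i j : ℕ}

@[simp]
theorem extendAxes_zero_left : extendAxes B 0 j = Set.univ := if_pos (Or.inl rfl)

@[simp]
theorem extendAxes_zero_right : extendAxes B i 0 = Set.univ := if_pos (Or.inr rfl)

theorem extendAxes_of_ne_zero (hi : i ≠ 0) (hj : j ≠ 0) : extendAxes B i j = B i j :=
  if_neg (not_or.mpr ⟨hi, hj⟩)

theorem extendAxes_pred_inter_eq {N M : ℕ} {A : ℕ → ℕ → Set Ω}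
    (hrec : ∀ i j, 2 ≤ i → i ≤ N → 2 ≤ j → j ≤ M → B (i - 1) j ∩ B i (j - 1) = A i j)
    (hrow : ∀ i, 2 ≤ i → i ≤ N → B (i - 1) 1 = A i 1)
    (hcol : ∀ j, 2 ≤ j → j ≤ M → B 1 (j - 1) = A 1 j)
    (h11 : A 1 1 = Set.univ) (hi : 1 ≤ i) (hiN : i ≤ N) (hj : 1 ≤ j) (hjM : j ≤ M) :
    extendAxes B (i - 1) j ∩ extendAxes B i (j - 1) = A i j := by
  obtain rfl | hi := eq_or_lt_of_le hi <;> obtain rfl | hj := eq_or_lt_of_le hj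
  · simp [h11]
  · simp [extendAxes_of_ne_zero one_ne_zero (Nat.sub_ne_zero_of_lt hj), hcol j hj hjM]
  · simp [extendAxes_of_ne_zero (Nat.sub_ne_zero_of_lt hi) one_ne_zero, hrow i hi hiN]
  · rw [extendAxes_of_ne_zero (Nat.sub_ne_zero_of_lt hi) (by omega),
      extendAxes_of_ne_zero (by omega) (Nat.sub_ne_zero_of_lt hj), hrec i j hi hiN hj hjM]

end extendAxes

theorem measureReal_mul_extendAxes_eq {Ω : Type*} {m : MeasurableSpace Ω}
    (P : Measure Ω) [IsFiniteMeasure P] {N M : ℕ}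
    (F : ℕ → ℕ → MeasurableSpace Ω) (hle : ∀ i j, F i j ≤ m)
    (hF4 : ∀ f : Ω → ℝ, Integrable f P → ∀ i j i' j',
      P[ (P[f | F i j]) | F i' j'] =ᵐ[P] P[f | F (min i i') (min j j')])
    {A B : ℕ → ℕ → Set Ω}
    (hB : ∀ i j, 1 ≤ i → i ≤ N → 1 ≤ j → j ≤ M → IsAtomOf (F i j) (B i j) ∧ B i j ⊆ A i j)
    (hinter : ∀ i j, 1 ≤ i → i ≤ N → 1 ≤ j → j ≤ M →
      extendAxes B (i - 1) j ∩ extendAxes B i (j - 1) = A i j)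
    ⦃i j : ℕ⦄ (hi : 1 ≤ i) (hiN : i ≤ N) (hj : 1 ≤ j) (hjM : j ≤ M) :
    P.real (A i j) * P.real (extendAxes B (i - 1) (j - 1))
      = P.real (extendAxes B (i - 1) j) * P.real (extendAxes B i (j - 1)) := by
  obtain rfl | hi := eq_or_lt_of_le hi
  · simp [← hinter 1 j le_rfl hiN hj hjM, mul_comm]
  obtain rfl | hj := eq_or_lt_of_le hj
  · simp [← hinter i 1 hi.le hiN le_rfl hjM]
  have hC : ∀ i j, 1 ≤ i → i ≤ N → 1 ≤ j → j ≤ M → IsAtomOf (F i j) (extendAxes B i j) ∧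
      extendAxes B i j ⊆ extendAxes B (i - 1) j ∩ extendAxes B i (j - 1) :=
    fun i j hi hiN hj hjM => by
      rw [hinter i j hi hiN hj hjM, extendAxes_of_ne_zero (i := i) (j := j) (by omega) (by omega)]
      exact hB i j hi hiN hj hjM
  have hcond : ∀ f : Ω → ℝ, Integrable f P →
      P[P[f | F (i - 1) j] | F i (j - 1)] =ᵐ[P] P[f | F (i - 1) (j - 1)] := fun f hf => by
    simpa only [min_eq_left (Nat.sub_le i 1), min_eq_right (Nat.sub_le j 1)]
      using hF4 f hf (i - 1) j i (j - 1)
  rw [← hinter i j hi.le hiN hj.le hjM]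
  exact (hC (i - 1) (j - 1) (by omega) (by omega) (by omega) (by omega)).1.measureReal_inter_mul_eq
    (hle _ _) (hle _ _) (hle _ _) hcond
    (hC (i - 1) j (by omega) (by omega) (by omega) hjM).1.1
    (hC i (j - 1) (by omega) hiN (by omega) (by omega)).1.1
    ((hC (i - 1) j (by omega) (by omega) (by omega) hjM).2.trans Set.inter_subset_right)
    ((hC i (j - 1) (by omega) hiN (by omega) (by omega)).2.trans Set.inter_subset_left)

theorem atom_product_formula_general
    {Ω : Type*} {m : MeasurableSpace Ω}
    (P : Measure Ω) [IsProbabilityMeasure P]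
    (N M : ℕ)
    (F : ℕ → ℕ → MeasurableSpace Ω)
    (hle : ∀ i j, F i j ≤ m)
    -- each `F i j` is atomic with atoms of positive measure
    (hatomic : ∀ i j, ∃ (ι : Type) (_ : Countable ι) (a : ι → Set Ω),
      Pairwise (Function.onFun Disjoint a) ∧ (⋃ k, a k) = Set.univ ∧
      (∀ k, 0 < P (a k)) ∧ F i j = MeasurableSpace.generateFrom (Set.range a))
    -- the (F4) condition
    (hF4 : ∀ f : Ω → ℝ, Integrable f P → ∀ i j i' j',
      P[ (P[f | F i j]) | F i' j'] =ᵐ[P] P[f | F (min i i') (min j j')])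
    -- the chains of atoms `A_{i,j} ∈ at F⁻_{i,j}` and `B_{i,j} ∈ at F_{i,j}`,
    -- `B_{i,j} ⊆ A_{i,j}`
    (A B : ℕ → ℕ → Set Ω)
    (hB : ∀ i j, 1 ≤ i → i ≤ N → 1 ≤ j → j ≤ M →
      IsAtomOf (F i j) (B i j) ∧ B i j ⊆ A i j)
    -- the compatibility (ancestor) relations
    (hrec : ∀ i j, 2 ≤ i → i ≤ N → 2 ≤ j → j ≤ M → B (i - 1) j ∩ B i (j - 1) = A i j)
    (hrow : ∀ i, 2 ≤ i → i ≤ N → B (i - 1) 1 = A i 1)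
    (hcol : ∀ j, 2 ≤ j → j ≤ M → B 1 (j - 1) = A 1 j)
    (h11 : A 1 1 = Set.univ) :
    ∀ n mm, 1 ≤ n → n ≤ N → 1 ≤ mm → mm ≤ M →
      ∏ i ∈ Finset.Icc 1 n, ∏ j ∈ Finset.Icc 1 mm,
          (P (B i j)).toReal / (P (A i j)).toReal
        = (P (B n mm)).toReal := by
  intro n mm hn hnN hm hmM
  simp only [← measureReal_def]
  have hCne : ∀ i ≤ n, ∀ j ≤ mm, P.real (extendAxes B i j) ≠ 0 := by
    intro i hi j hj
    by_cases hij : i = 0 ∨ j = 0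
    · rcases hij with rfl | rfl <;> simp
    obtain ⟨ι, _, a, hdisj, hcover, hpos, hgen⟩ := hatomic i j
    obtain ⟨⟨hBmeas, hBne, -⟩, -⟩ := hB i j (by omega) (by omega) (by omega) (by omega)
    rw [extendAxes_of_ne_zero (by omega) (by omega), measureReal_ne_zero_iff]
    exact (measure_pos_of_measurableSet_generateFrom hdisj hcover hpos (hgen ▸ hBmeas) hBne).ne'
  have hfactor := measureReal_mul_extendAxes_eq P F hle hF4 hB
    fun _ _ => extendAxes_pred_inter_eq hrec hrow hcol h11
  calc ∏ i ∈ Finset.Icc 1 n, ∏ j ∈ Finset.Icc 1 mm, P.real (B i j) / P.real (A i j)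
      = ∏ i ∈ Finset.Icc 1 n, ∏ j ∈ Finset.Icc 1 mm,
          P.real (extendAxes B i j) * P.real (extendAxes B (i - 1) (j - 1)) /
            (P.real (extendAxes B (i - 1) j) * P.real (extendAxes B i (j - 1))) := by
        refine Finset.prod_congr rfl fun i hi => Finset.prod_congr rfl fun j hj => ?_
        rw [Finset.mem_Icc] at hi hj
        rw [← hfactor hi.1 (by omega) hj.1 (by omega),
          mul_div_mul_right _ _ (hCne _ (by omega) _ (by omega)),
          extendAxes_of_ne_zero (by omega) (by omega)]
    _ = P.real (B n mm) := by
        rw [Finset.prod_Icc_prod_Icc_div hCne, extendAxes_of_ne_zero (by omega) (by omega)]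
        simp

/-- The telescoping product formula for chains of atoms of an atomic biparameter
(F4)-filtration: `∏_{i=1}^n ∏_{j=1}^m P(B_{i,j})/P(A_{i,j}) = P(B_{n,m})`. -/
theorem atom_product_formula
    {Ω : Type*} {m : MeasurableSpace Ω}
    (P : Measure Ω) [IsProbabilityMeasure P]
    (N M : ℕ)
    (F : ℕ → ℕ → MeasurableSpace Ω)
    (hle : ∀ i j, F i j ≤ m)
    (hmono₁ : ∀ i j, F i j ≤ F (i + 1) j) (hmono₂ : ∀ i j, F i j ≤ F i (j + 1))
    (htriv : ∀ i j, F i 0 = ⊥ ∧ F 0 j = ⊥)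
    -- each `F i j` is atomic with atoms of positive measure
    (hatomic : ∀ i j, ∃ (ι : Type) (_ : Countable ι) (a : ι → Set Ω),
      Pairwise (Function.onFun Disjoint a) ∧ (⋃ k, a k) = Set.univ ∧
      (∀ k, 0 < P (a k)) ∧ F i j = MeasurableSpace.generateFrom (Set.range a))
    -- the (F4) condition
    (hF4 : ∀ f : Ω → ℝ, Integrable f P → ∀ i j i' j',
      P[ (P[f | F i j]) | F i' j'] =ᵐ[P] P[f | F (min i i') (min j j')])
    -- the chains of atoms `A_{i,j} ∈ at F⁻_{i,j}` and `B_{i,j} ∈ at F_{i,j}`,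
    -- `B_{i,j} ⊆ A_{i,j}`
    (A B : ℕ → ℕ → Set Ω)
    (hA : ∀ i j, 1 ≤ i → i ≤ N → 1 ≤ j → j ≤ M →
      IsAtomOf (F (i - 1) j ⊔ F i (j - 1)) (A i j))
    (hB : ∀ i j, 1 ≤ i → i ≤ N → 1 ≤ j → j ≤ M →
      IsAtomOf (F i j) (B i j) ∧ B i j ⊆ A i j)
    -- the compatibility (ancestor) relations
    (hrec : ∀ i j, 2 ≤ i → i ≤ N → 2 ≤ j → j ≤ M → B (i - 1) j ∩ B i (j - 1) = A i j)
    (hrow : ∀ i, 2 ≤ i → i ≤ N → B (i - 1) 1 = A i 1)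
    (hcol : ∀ j, 2 ≤ j → j ≤ M → B 1 (j - 1) = A 1 j)
    (h11 : A 1 1 = Set.univ) :
    ∀ n mm, 1 ≤ n → n ≤ N → 1 ≤ mm → mm ≤ M →
      ∏ i ∈ Finset.Icc 1 n, ∏ j ∈ Finset.Icc 1 mm,
          (P (B i j)).toReal / (P (A i j)).toReal
        = (P (B n mm)).toReal :=
  atom_product_formula_general P N M F hle hatomic hF4 A B hB hrec hrow hcol h11
end

section
/- Let (S, 𝒮, μ) = ⨂_{j=1}^n (S_j, 𝒮_j, μ_j) with canonical filtration (F_k), and let (φ_k : 1 ≤ k ≤ n) be nonnegative functions with φ_k measurable with respect to F_k (i.e. φ_k depends only on x_1,…,x_k). Then ∫_S (∑_{k=1}^n φ_k(x_1,…,x_k))^{1/2} μ(dx) ≤ C ∫_S (∑_{k=1}^n ∫_{S_k} φ_k(x_1,…,x_{k−1},t) μ_k(dt))^{1/2} μ(dx) for an absolute constant C. -/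
/-!
Write `g k x = ∫ φ k (x₁, …, x_{k-1}, t, …) dμ_k(t)` (the conditional expectation of `φ k` given
the first `k - 1` coordinates), `U = ∑ φ k` and `V = ∑ g k`. The partial sums `∑_{j ≤ k} g j`
are predictable, so on the events `{∑_{j ≤ k} g j ≤ a}` the integrals of `φ k` and `g k` agree;
summing over `k` gives `∫ U ⊓ a ≤ 2 ∫ V ⊓ a` for every level `a`. Since `√u` is comparable to
`∑ᵢ 2⁻ⁱ (u ⊓ 4ⁱ)`, these truncated bounds integrate to `∫ √U ≤ 16 ∫ √V`.
-/

open MeasureTheory ENNReal Finset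

namespace ENNReal

/-- A dyadic discretisation of `√u = ¼ ∫₀^∞ min(u, a) a^{-3/2} da`. -/
noncomputable def dyadicSqrt (u : ℝ≥0∞) : ℝ≥0∞ :=
  ∑' i : ℤ, (2 ^ i)⁻¹ * (u ⊓ 2 ^ i * 2 ^ i)

theorem rpow_half_mul_self (u : ℝ≥0∞) : u ^ (1 / 2 : ℝ) * u ^ (1 / 2 : ℝ) = u := by
  rw [← rpow_add_of_nonneg _ _ (by norm_num) (by norm_num)]
  norm_num

theorem two_zpow_ne_zero (i : ℤ) : (2 : ℝ≥0∞) ^ i ≠ 0 :=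
  (zpow_pos (by norm_num) (by norm_num) i).ne'

theorem two_zpow_ne_top (i : ℤ) : (2 : ℝ≥0∞) ^ i ≠ ⊤ :=
  (zpow_lt_top (by norm_num) (by norm_num) i).ne

theorem tsum_inv_two_pow : ∑' n : ℕ, ((2 : ℝ≥0∞) ^ n)⁻¹ = 2 := by
  simp_rw [ENNReal.inv_pow, tsum_geometric, one_sub_inv_two, inv_inv]

section

variable {b u : ℝ≥0∞}

theorem inv_mul_inf_mul_self_le (hb₀ : b ≠ 0) (hb : b ≠ ⊤) : b⁻¹ * (u ⊓ b * b) ≤ b :=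
  (mul_le_mul_right inf_le_right _).trans_eq (ENNReal.inv_mul_cancel_left hb₀ hb)

theorem inv_mul_inf_mul_self_of_le (hb₀ : b ≠ 0) (hb : b ≠ ⊤) (h : b * b ≤ u) :
    b⁻¹ * (u ⊓ b * b) = b := by
  rw [inf_eq_right.2 h, ENNReal.inv_mul_cancel_left hb₀ hb]

end

theorem two_zpow_le_dyadicSqrt {u : ℝ≥0∞} {j : ℤ} (h : 2 ^ j ≤ u ^ (1 / 2 : ℝ)) :
    2 ^ j ≤ dyadicSqrt u := by
  calc (2 : ℝ≥0∞) ^ j = (2 ^ j)⁻¹ * (u ⊓ 2 ^ j * 2 ^ j) := by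
        refine (inv_mul_inf_mul_self_of_le (two_zpow_ne_zero j) (two_zpow_ne_top j) ?_).symm
        rw [← rpow_half_mul_self u]
        exact mul_le_mul' h h
    _ ≤ dyadicSqrt u := ENNReal.le_tsum j

theorem rpow_half_le_two_mul_dyadicSqrt (u : ℝ≥0∞) : u ^ (1 / 2 : ℝ) ≤ 2 * dyadicSqrt u := by
  rcases eq_or_ne u 0 with rfl | hu₀
  · simp
  rcases eq_or_ne u ⊤ with rfl | hu
  · suffices dyadicSqrt ⊤ = ⊤ by simp [this]
    refine eq_top_of_forall_nnreal_le fun r => ?_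
    obtain ⟨n, hn⟩ := pow_unbounded_of_one_lt r _root_.one_lt_two
    calc (r : ℝ≥0∞) ≤ 2 ^ (n : ℤ) := by
          rw [zpow_natCast]; exact_mod_cast hn.le
      _ ≤ dyadicSqrt ⊤ := two_zpow_le_dyadicSqrt (by simp)
  obtain ⟨j, hj, hj'⟩ := exists_mem_Ico_zpow (x := u ^ (1 / 2 : ℝ)) (by simp [hu₀])
    (by simp [hu]) one_lt_two ofNat_ne_top
  calc u ^ (1 / 2 : ℝ) ≤ 2 ^ (j + 1) := hj'.le
    _ = 2 * 2 ^ j := by rw [ENNReal.zpow_add two_ne_zero ofNat_ne_top, zpow_one, mul_comm]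
    _ ≤ 2 * dyadicSqrt u := by gcongr; exact two_zpow_le_dyadicSqrt hj

theorem dyadicSqrt_le_four_mul_rpow_half (u : ℝ≥0∞) : dyadicSqrt u ≤ 4 * u ^ (1 / 2 : ℝ) := by
  rcases eq_or_ne u 0 with rfl | hu₀
  · simp [dyadicSqrt]
  rcases eq_or_ne u ⊤ with rfl | hu
  · simp
  set s := u ^ (1 / 2 : ℝ)
  obtain ⟨j, hj, hj'⟩ := exists_mem_Ico_zpow (x := s) (by simp [s, hu₀]) (by simp [s, hu])
    one_lt_two ofNat_ne_top
  set t : ℤ → ℝ≥0∞ := fun i => (2 ^ i)⁻¹ * (u ⊓ 2 ^ i * 2 ^ i)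
  -- above the scale `2 ^ j ≤ s < 2 ^ (j + 1)` bound the terms by `2⁻ⁱ u`, below it by `2ⁱ`
  have above (n : ℕ) : t (n + (j + 1)) ≤ (2 ^ n)⁻¹ * s :=
    calc t (n + (j + 1)) ≤ (2 ^ ((n : ℤ) + (j + 1)))⁻¹ * u := mul_le_mul_right inf_le_left _
      _ = (2 ^ n)⁻¹ * ((2 ^ (j + 1))⁻¹ * (s * s)) := by
        rw [rpow_half_mul_self, ENNReal.zpow_add two_ne_zero ofNat_ne_top, zpow_natCast,
          ENNReal.mul_inv (by simp) (by simp), mul_assoc]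
      _ ≤ (2 ^ n)⁻¹ * ((2 ^ (j + 1))⁻¹ * (2 ^ (j + 1) * s)) := by gcongr
      _ = (2 ^ n)⁻¹ * s := by
        rw [ENNReal.inv_mul_cancel_left (two_zpow_ne_zero _) (two_zpow_ne_top _)]
  have below (n : ℕ) : t (-(n + 1) + (j + 1)) ≤ (2 ^ n)⁻¹ * s :=
    calc t (-(n + 1) + (j + 1)) ≤ 2 ^ (-(n + 1) + (j + 1) : ℤ) :=
          inv_mul_inf_mul_self_le (two_zpow_ne_zero _) (two_zpow_ne_top _)
      _ = (2 ^ n)⁻¹ * 2 ^ j := by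
        rw [show -((n : ℤ) + 1) + (j + 1) = -n + j by ring,
          ENNReal.zpow_add two_ne_zero ofNat_ne_top, ENNReal.zpow_neg, zpow_natCast]
      _ ≤ (2 ^ n)⁻¹ * s := mul_le_mul_right hj _
  calc dyadicSqrt u = ∑' m : ℤ, t (m + (j + 1)) := ((Equiv.addRight (j + 1)).tsum_eq t).symm
    _ = ∑' n : ℕ, t (n + (j + 1)) + ∑' n : ℕ, t (-(n + 1) + (j + 1)) :=
      tsum_of_nat_of_neg_add_one ENNReal.summable ENNReal.summable
    _ ≤ ∑' n : ℕ, (2 ^ n)⁻¹ * s + ∑' n : ℕ, (2 ^ n)⁻¹ * s :=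
      add_le_add (ENNReal.tsum_le_tsum above) (ENNReal.tsum_le_tsum below)
    _ = 4 * s := by rw [ENNReal.tsum_mul_right, tsum_inv_two_pow, ← add_mul]; norm_num

end ENNReal

section Truncation

variable {α : Type*} [MeasurableSpace α] {ν : Measure α}

theorem lintegral_dyadicSqrt {f : α → ℝ≥0∞} (hf : Measurable f) :
    ∫⁻ x, dyadicSqrt (f x) ∂ν = ∑' i : ℤ, (2 ^ i)⁻¹ * ∫⁻ x, f x ⊓ 2 ^ i * 2 ^ i ∂ν := by
  simp only [dyadicSqrt]
  rw [lintegral_tsum fun i => ((hf.min measurable_const).const_mul _).aemeasurable]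
  exact tsum_congr fun i => lintegral_const_mul _ (hf.min measurable_const)

theorem lintegral_rpow_half_le_of_lintegral_inf_le {f g : α → ℝ≥0∞} (hf : Measurable f)
    (hg : Measurable g) {c : ℝ≥0∞} (hfg : ∀ a, ∫⁻ x, f x ⊓ a ∂ν ≤ c * ∫⁻ x, g x ⊓ a ∂ν) :
    ∫⁻ x, f x ^ (1 / 2 : ℝ) ∂ν ≤ 8 * c * ∫⁻ x, g x ^ (1 / 2 : ℝ) ∂ν :=
  calc ∫⁻ x, f x ^ (1 / 2 : ℝ) ∂ν ≤ ∫⁻ x, 2 * dyadicSqrt (f x) ∂ν :=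
        lintegral_mono fun x => rpow_half_le_two_mul_dyadicSqrt (f x)
    _ = 2 * ∑' i : ℤ, (2 ^ i)⁻¹ * ∫⁻ x, f x ⊓ 2 ^ i * 2 ^ i ∂ν := by
        rw [lintegral_const_mul' _ _ ofNat_ne_top, lintegral_dyadicSqrt hf]
    _ ≤ 2 * ∑' i : ℤ, (2 ^ i)⁻¹ * (c * ∫⁻ x, g x ⊓ 2 ^ i * 2 ^ i ∂ν) := by
        gcongr with i; exact hfg _
    _ = 2 * c * ∫⁻ x, dyadicSqrt (g x) ∂ν := by
        rw [lintegral_dyadicSqrt hg, mul_assoc]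
        congr 1
        rw [← ENNReal.tsum_mul_left]
        exact tsum_congr fun i => mul_left_comm _ _ _
    _ ≤ 2 * c * ∫⁻ x, 4 * g x ^ (1 / 2 : ℝ) ∂ν := by
        gcongr with x; exact dyadicSqrt_le_four_mul_rpow_half (g x)
    _ = 8 * c * ∫⁻ x, g x ^ (1 / 2 : ℝ) ∂ν := by
        rw [lintegral_const_mul' _ _ ofNat_ne_top, ← mul_assoc, mul_right_comm 2 c 4]; norm_num

end Truncation

theorem sum_ite_sum_Iic_le {ι M : Type*} [Fintype ι] [LinearOrder ι] [LocallyFiniteOrderBot ι]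
    [AddCommMonoid M] [LinearOrder M] [CanonicallyOrderedAdd M] (g : ι → M) (a : M) :
    ∑ k, (if ∑ j ∈ Iic k, g j ≤ a then g k else 0) ≤ a := by
  rw [sum_ite, sum_const_zero, add_zero]
  set s := univ.filter fun k => ∑ j ∈ Iic k, g j ≤ a
  rcases s.eq_empty_or_nonempty with hs | hs
  · simp [hs]
  · calc ∑ k ∈ s, g k ≤ ∑ j ∈ Iic (s.max' hs), g j :=
          sum_le_sum_of_subset fun k hk => mem_Iic.2 (s.le_max' k hk)
      _ ≤ a := (mem_filter.1 (s.max'_mem hs)).2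

section Domination

variable {α ι : Type*} [Fintype ι] [LinearOrder ι] [LocallyFiniteOrderBot ι]

theorem inf_sum_le_sum_indicator_add (φ g : ι → α → ℝ≥0∞) (a : ℝ≥0∞) (x : α) :
    (∑ k, φ k x) ⊓ a ≤
      ∑ k, {y | ∑ j ∈ Iic k, g j y ≤ a}.indicator (φ k) x + (∑ k, g k x) ⊓ a := by
  by_cases hx : ∑ k, g k x ≤ a
  · have hG : ∀ k, ∑ j ∈ Iic k, g j x ≤ a := fun k =>
      (sum_le_sum_of_subset (subset_univ _)).trans hx
    simp [hG]
  · rw [inf_eq_right.2 (not_le.1 hx).le]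
    exact inf_le_right.trans le_add_self

variable [MeasurableSpace α] {ν : Measure α} {φ g : ι → α → ℝ≥0∞} {a : ℝ≥0∞}

/-- Lenglart's domination argument: `φ k` is only counted while the predictable partial sum
`∑_{j ≤ k} g j` stays below `a`, and there its integral is that of `g k`. -/
theorem lintegral_sum_inf_le_two_mul (hφ : ∀ k, Measurable (φ k)) (hg : ∀ k, Measurable (g k))
    (hcomp : ∀ k, ∫⁻ x, {y | ∑ j ∈ Iic k, g j y ≤ a}.indicator (φ k) x ∂ν =
      ∫⁻ x, {y | ∑ j ∈ Iic k, g j y ≤ a}.indicator (g k) x ∂ν) :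
    ∫⁻ x, (∑ k, φ k x) ⊓ a ∂ν ≤ 2 * ∫⁻ x, (∑ k, g k x) ⊓ a ∂ν := by
  have hG : ∀ k, MeasurableSet {y | ∑ j ∈ Iic k, g j y ≤ a} := fun k =>
    measurableSet_le (Finset.measurable_sum _ fun j _ => hg j) measurable_const
  calc ∫⁻ x, (∑ k, φ k x) ⊓ a ∂ν
      ≤ ∫⁻ x, ∑ k, {y | ∑ j ∈ Iic k, g j y ≤ a}.indicator (φ k) x + (∑ k, g k x) ⊓ a ∂ν :=
        lintegral_mono (inf_sum_le_sum_indicator_add φ g a)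
    _ = ∑ k, ∫⁻ x, {y | ∑ j ∈ Iic k, g j y ≤ a}.indicator (g k) x ∂ν
          + ∫⁻ x, (∑ k, g k x) ⊓ a ∂ν := by
        rw [lintegral_add_left (Finset.measurable_sum _ fun k _ => (hφ k).indicator (hG k)),
          lintegral_finsetSum _ fun k _ => (hφ k).indicator (hG k)]
        simp_rw [hcomp]
    _ = ∫⁻ x, ∑ k, {y | ∑ j ∈ Iic k, g j y ≤ a}.indicator (g k) x ∂ν
          + ∫⁻ x, (∑ k, g k x) ⊓ a ∂ν := by
        rw [lintegral_finsetSum _ fun k _ => (hg k).indicator (hG k)]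
    _ ≤ ∫⁻ x, (∑ k, g k x) ⊓ a ∂ν + ∫⁻ x, (∑ k, g k x) ⊓ a ∂ν := by
        gcongr with x
        refine le_inf ?_ ?_
        · exact sum_le_sum fun k _ => Set.indicator_le_self _ _ x
        · simpa [Set.indicator_apply] using sum_ite_sum_Iic_le (g · x) a
    _ = 2 * ∫⁻ x, (∑ k, g k x) ⊓ a ∂ν := (two_mul _).symm

end Domination

section Marginal

variable {δ : Type*} {X : δ → Type*} [DecidableEq δ] {s : Set δ} {k : δ}

theorem DependsOn.apply_update_of_notMem {β : Type*} {f : (∀ i, X i) → β} (hf : DependsOn f s)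
    (hk : k ∉ s) (x : ∀ i, X i) (y : X k) : f (Function.update x k y) = f x :=
  hf fun _ hi => Function.update_of_ne (ne_of_mem_of_not_mem hi hk) _ _

variable [∀ i, MeasurableSpace (X i)] {μ : ∀ i, Measure (X i)}

theorem DependsOn.lmarginal {f : (∀ i, X i) → ℝ≥0∞} (hf : DependsOn f s) (t : Finset δ) :
    DependsOn (∫⋯∫⁻_t, f ∂μ) (s \ t) :=
  fun _ _ h => lintegral_congr fun y => hf.updateFinset y h

variable [∀ i, IsProbabilityMeasure (μ i)]

theorem lmarginal_singleton_of_dependsOn {f : (∀ i, X i) → ℝ≥0∞} (hf : DependsOn f {k}ᶜ) :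
    ∫⋯∫⁻_{k}, f ∂μ = f := by
  ext x
  simp [lmarginal_singleton, hf.apply_update_of_notMem (Set.notMem_compl_iff.2 rfl)]

theorem lmarginal_singleton_indicator {t : Set (∀ i, X i)} (ht : DependsOn (· ∈ t) {k}ᶜ)
    (f : (∀ i, X i) → ℝ≥0∞) :
    ∫⋯∫⁻_{k}, t.indicator f ∂μ = t.indicator (∫⋯∫⁻_{k}, f ∂μ) := by
  ext x
  have hx : ∀ y, (Function.update x k y ∈ t ↔ x ∈ t) := fun y =>
    iff_of_eq (ht.apply_update_of_notMem (Set.notMem_compl_iff.2 rfl) x y)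
  by_cases hxt : x ∈ t <;> simp [lmarginal_singleton, hx, hxt]

variable [Fintype δ]

theorem lintegral_lmarginal_singleton {f : (∀ i, X i) → ℝ≥0∞} (hf : Measurable f) :
    ∫⁻ x, (∫⋯∫⁻_{k}, f ∂μ) x ∂Measure.pi μ = ∫⁻ x, f x ∂Measure.pi μ := by
  refine lintegral_eq_of_lmarginal_eq (μ := μ) {k} (hf.lmarginal μ) hf
    (lmarginal_singleton_of_dependsOn ?_)
  simpa [Set.compl_eq_univ_sdiff] using (dependsOn_univ f).lmarginal (μ := μ) {k}

/-- Integrating out the `k`-th coordinate is the conditional expectation given the other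
coordinates. -/
theorem lintegral_indicator_lmarginal_singleton {t : Set (∀ i, X i)} (ht : MeasurableSet t)
    (htk : DependsOn (· ∈ t) {k}ᶜ) {f : (∀ i, X i) → ℝ≥0∞} (hf : Measurable f) :
    ∫⁻ x, t.indicator (∫⋯∫⁻_{k}, f ∂μ) x ∂Measure.pi μ = ∫⁻ x, t.indicator f x ∂Measure.pi μ := by
  rw [← lmarginal_singleton_indicator htk, lintegral_lmarginal_singleton (hf.indicator ht)]

end Marginal

theorem lintegral_rpow_half_sum_le_lmarginal {ι : Type*} [Fintype ι] [LinearOrder ι]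
    [LocallyFiniteOrderBot ι] {X : ι → Type*} [∀ i, MeasurableSpace (X i)]
    {μ : ∀ i, Measure (X i)} [∀ i, IsProbabilityMeasure (μ i)] {φ : ι → (∀ i, X i) → ℝ≥0∞}
    (hφ : ∀ k, Measurable (φ k)) (hadapted : ∀ k, DependsOn (φ k) (Set.Iic k)) :
    ∫⁻ x, (∑ k, φ k x) ^ (1 / 2 : ℝ) ∂Measure.pi μ
      ≤ 16 * ∫⁻ x, (∑ k, (∫⋯∫⁻_{k}, φ k ∂μ) x) ^ (1 / 2 : ℝ) ∂Measure.pi μ := by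
  set g : ι → (∀ i, X i) → ℝ≥0∞ := fun k => ∫⋯∫⁻_{k}, φ k ∂μ
  have hg (k : ι) : Measurable (g k) := (hφ k).lmarginal μ
  have hg_predictable (k : ι) : DependsOn (g k) (Set.Iio k) := by
    simpa [g] using (hadapted k).lmarginal (μ := μ) {k}
  have hlevel (k : ι) (a : ℝ≥0∞) : DependsOn (· ∈ {y | ∑ j ∈ Iic k, g j y ≤ a}) {k}ᶜ :=
    fun x y hxy => by
      have : ∑ j ∈ Iic k, g j x = ∑ j ∈ Iic k, g j y := sum_congr rfl fun j hj =>
        hg_predictable j fun i hi => hxy i (hi.trans_le (mem_Iic.1 hj)).ne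
      simp [this]
  have htrunc (a : ℝ≥0∞) := lintegral_sum_inf_le_two_mul (ν := Measure.pi μ) (a := a) hφ hg
    fun k => (lintegral_indicator_lmarginal_singleton
      (measurableSet_le (Finset.measurable_sum _ fun j _ => hg j) measurable_const)
      (hlevel k a) (hφ k)).symm
  calc ∫⁻ x, (∑ k, φ k x) ^ (1 / 2 : ℝ) ∂Measure.pi μ
      ≤ 8 * 2 * ∫⁻ x, (∑ k, g k x) ^ (1 / 2 : ℝ) ∂Measure.pi μ :=
        lintegral_rpow_half_le_of_lintegral_inf_le (Finset.measurable_sum _ fun k _ => hφ k)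
          (Finset.measurable_sum _ fun k _ => hg k) htrunc
    _ = 16 * ∫⁻ x, (∑ k, g k x) ^ (1 / 2 : ℝ) ∂Measure.pi μ := by norm_num

/-- Decoupling inequality on a finite product space: for nonnegative `φ_k` adapted to the
canonical filtration, `∫ (∑ φ_k(x₁,…,x_k))^{1/2} ≤ C ∫ (∑ ∫ φ_k(x₁,…,x_{k-1},t) dμ_k(t))^{1/2}`
with an absolute constant `C`. -/
theorem decoupled_sqrt_inequality :
    ∃ C : ℝ≥0∞, C ≠ ⊤ ∧
      ∀ (n : ℕ) (S : Fin n → Type) [∀ i, MeasurableSpace (S i)]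
        (μ : (i : Fin n) → Measure (S i)) [∀ i, IsProbabilityMeasure (μ i)]
        (μprod : Measure ((i : Fin n) → S i)) [IsProbabilityMeasure μprod],
        -- `μprod` is the product of the `μ i`
        (∀ t : (i : Fin n) → Set (S i), (∀ i, MeasurableSet (t i)) →
          μprod (Set.univ.pi t) = ∏ i, μ i (t i)) →
        ∀ φ : Fin n → ((i : Fin n) → S i) → ℝ≥0∞,
          -- `φ k` is measurable with respect to the canonical filtration at time `k`,
          -- i.e. depends only on the coordinates `x₁, …, x_k`
          (∀ k : Fin n, Measurable[MeasurableSpace.comap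
              (fun x => fun i : {i : Fin n // i ≤ k} => x i) inferInstance] (φ k)) →
          ∫⁻ x, (∑ k, φ k x) ^ (1 / 2 : ℝ) ∂μprod
            ≤ C * ∫⁻ x, (∑ k, ∫⁻ t, φ k (Function.update x k t) ∂(μ k)) ^ (1 / 2 : ℝ)
                ∂μprod := by
  refine ⟨16, ofNat_ne_top, fun n S _ μ _ μprod _ hprod φ hφ => ?_⟩
  have hφ_piLE (k : Fin n) : Measurable[Filtration.piLE k] (φ k) := hφ k
  rw [← Measure.pi_eq hprod]
  simpa only [lmarginal_singleton] using lintegral_rpow_half_sum_le_lmarginal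
    (fun k => (hφ_piLE k).mono (Filtration.piLE.le k) le_rfl)
    (fun k => (hφ_piLE k).dependsOn_of_piLE)
end
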